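/- arXiv:1502.02831 — 5 statements merged into one kernel-verified Lean document; each statement's English description precedes it below -/
import Mathlib

section
/- Let 0<a<1, 0<p<1, and let (ξ_i) be i.i.d. nonnegative integer-valued random variables with P(ξ_1 = 0) = 1-a and P(ξ_1 ≥ k) = a·p^{k-1} for all k ≥ 1. Let 0<ε<1. If 1-p > (8/ε)·a, then P(ξ_1 + ... + ξ_n ≥ ⌈εn⌉) ≤ 6·n·a·exp(−(1−p)·ε·n/8). -/
open MeasureTheory ProbabilityTheory Real

set_option maxHeartbeats 1000000 in
theorem stmt0 {Ω : Type*} [MeasureSpace Ω] [IsProbabilityMeasure (ℙ : Measure Ω)]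
    (a p ε : ℝ) (ha0 : 0 < a) (ha1 : a < 1) (hp0 : 0 < p) (hp1 : p < 1)
    (hε0 : 0 < ε) (hε1 : ε < 1) (hgap : 1 - p > (8 / ε) * a)
    (ξ : ℕ → Ω → ℕ) (hmeas : ∀ i, Measurable (ξ i))
    (hindep : iIndepFun ξ ℙ)
    (hident : ∀ i, Measure.map (ξ i) ℙ = Measure.map (ξ 0) ℙ)
    (h0 : ℙ {ω | ξ 0 ω = 0} = ENNReal.ofReal (1 - a))
    (htail : ∀ k : ℕ, 1 ≤ k → ℙ {ω | k ≤ ξ 0 ω} = ENNReal.ofReal (a * p ^ (k - 1)))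
    (n : ℕ) (hn : 1 ≤ n) :
    ℙ {ω | ⌈ε * n⌉₊ ≤ ∑ i ∈ Finset.range n, ξ i ω}
      ≤ ENNReal.ofReal (6 * n * a * Real.exp (-(1 - p) * ε * n / 8)) := by
  -- basic numbers
  have hn1 : (1:ℝ) ≤ (n:ℝ) := by exact_mod_cast hn
  have hεn : 0 < ε * n := by positivity
  have h1p : (0:ℝ) < 1 - p := by
    have : 0 < 8 / ε * a := by positivity
    linarith
  have ha8 : a < ε * (1 - p) / 8 := by
    have h2 : 8 * a < ε * (1 - p) := by
      have h3 := mul_lt_mul_of_pos_right hgap hε0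
      have h4 : 8 / ε * a * ε = 8 * a := by field_simp
      rw [h4] at h3
      linarith [h3]
    linarith
  have hE0 : 0 ≤ (1 - p) * ε * n / 8 := by
    apply div_nonneg _ (by norm_num)
    exact mul_nonneg (mul_nonneg h1p.le hε0.le) (Nat.cast_nonneg n)
  obtain ⟨E, hE⟩ : ∃ x : ℝ, x = (1 - p) * ε * n / 8 := ⟨_, rfl⟩
  -- q, c, M
  obtain ⟨q, hqdef⟩ : ∃ x : ℝ, x = (3 - p) / 2 := ⟨_, rfl⟩
  have hq1 : 1 < q := by rw [hqdef]; linarith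
  have hq0 : 0 < q := by linarith
  have hpq : p * q < 1 := by rw [hqdef]; nlinarith
  have hpq0 : 0 ≤ p * q := by positivity
  obtain ⟨M, hMdef⟩ : ∃ x : ℝ, x = 1 + a / (2 - p) := ⟨_, rfl⟩
  have hM1 : 1 ≤ M := by
    have h : 0 ≤ a / (2 - p) := div_nonneg ha0.le (by linarith)
    rw [hMdef]; linarith
  have hM0 : 0 ≤ M := by linarith
  have hMexp : M ≤ Real.exp a := by
    have h2p : 1 ≤ 2 - p := by linarith
    have hle : a / (2 - p) ≤ a := by
      rw [div_le_iff₀ (by linarith : (0:ℝ) < 2 - p)]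
      nlinarith
    have h2 := Real.add_one_le_exp a
    rw [hMdef]; linarith
  obtain ⟨c, hcdef⟩ : ∃ x : ENNReal, x = ENNReal.ofReal q := ⟨_, rfl⟩
  have hc1 : 1 ≤ c := by
    rw [hcdef, ← ENNReal.ofReal_one]
    exact ENNReal.ofReal_le_ofReal hq1.le
  -- tails for each i
  have htaili : ∀ (i : ℕ) (k : ℕ), 1 ≤ k →
      ℙ {ω | k ≤ ξ i ω} = ENNReal.ofReal (a * p ^ (k - 1)) := by
    intro i k hk
    have h1 : {ω | k ≤ ξ i ω} = ξ i ⁻¹' {x | k ≤ x} := rfl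
    have h2 : {ω | k ≤ ξ 0 ω} = ξ 0 ⁻¹' {x | k ≤ x} := rfl
    have hset : MeasurableSet {x : ℕ | k ≤ x} := trivial
    rw [h1, ← Measure.map_apply (hmeas i) hset, hident i,
      Measure.map_apply (hmeas 0) hset, ← h2, htail k hk]
  -- singleton masses of the law
  obtain ⟨μ, hμdef⟩ : ∃ m : Measure ℕ, m = Measure.map (ξ 0) ℙ := ⟨_, rfl⟩
  have hμtail : ∀ k : ℕ, 1 ≤ k → μ {x | k ≤ x} = ENNReal.ofReal (a * p ^ (k - 1)) := by
    intro k hk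
    rw [hμdef, Measure.map_apply (hmeas 0) (by exact trivial : MeasurableSet {x : ℕ | k ≤ x})]
    exact htail k hk
  have hμ0 : μ {0} = ENNReal.ofReal (1 - a) := by
    rw [hμdef, Measure.map_apply (hmeas 0) (by exact trivial)]
    have : ξ 0 ⁻¹' {0} = {ω | ξ 0 ω = 0} := by ext ω; simp
    rw [this, h0]
  have hμs : ∀ k : ℕ, μ {k + 1} = ENNReal.ofReal (a * (1 - p) * p ^ k) := by
    intro k
    have hsplit : {x : ℕ | k + 1 ≤ x} = {k + 1} ∪ {x : ℕ | k + 2 ≤ x} := by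
      ext x; simp; omega
    have hdisj : Disjoint ({k + 1} : Set ℕ) {x : ℕ | k + 2 ≤ x} := by
      rw [Set.disjoint_left]; intro x hx; simp at hx ⊢; omega
    have hadd : μ {x : ℕ | k + 1 ≤ x} = μ {k + 1} + μ {x : ℕ | k + 2 ≤ x} := by
      rw [hsplit, measure_union hdisj (by exact trivial)]
    rw [hμtail (k + 1) (by omega), hμtail (k + 2) (by omega)] at hadd
    simp only [show k + 1 - 1 = k from rfl, show k + 2 - 1 = k + 1 from rfl] at hadd
    have hsub : μ {k + 1} = ENNReal.ofReal (a * p ^ k) - ENNReal.ofReal (a * p ^ (k + 1)) :=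
      ENNReal.eq_sub_of_add_eq (by simp) hadd.symm
    rw [hsub, ← ENNReal.ofReal_sub _ (by positivity)]
    congr 1; ring
  -- MGF of each variable
  have hmgf : ∀ i : ℕ, ∫⁻ ω, c ^ (ξ i ω) ∂ℙ = ENNReal.ofReal M := by
    intro i
    have hmap : ∫⁻ ω, c ^ (ξ i ω) ∂ℙ = ∫⁻ x, c ^ x ∂μ := by
      rw [hμdef, ← hident i, lintegral_map measurable_from_top (hmeas i)]
    rw [hmap, lintegral_countable' (fun x => c ^ x)]
    rw [tsum_eq_zero_add' ENNReal.summable]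
    have hterm : ∀ k : ℕ, c ^ (k + 1) * μ {k + 1}
        = ENNReal.ofReal (q * (a * (1 - p)) * (p * q) ^ k) := by
      intro k
      rw [hμs k, hcdef, ← ENNReal.ofReal_pow hq0.le, ← ENNReal.ofReal_mul (by positivity)]
      congr 1; ring
    simp only [hterm, pow_zero, one_mul, hμ0]
    rw [← ENNReal.ofReal_tsum_of_nonneg (fun k => by positivity)
      ((summable_geometric_of_lt_one hpq0 hpq).mul_left _)]
    rw [tsum_mul_left, tsum_geometric_of_lt_one hpq0 hpq]
    rw [← ENNReal.ofReal_add (by linarith)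
      (mul_nonneg (mul_nonneg hq0.le (by nlinarith)) (inv_nonneg.2 (by nlinarith)))]
    congr 1
    have h1pq : 1 - p * q = (1 - p) * (2 - p) / 2 := by rw [hqdef]; ring
    have h2p : (2:ℝ) - p ≠ 0 := by linarith
    have h1pq0 : (1:ℝ) - p * q ≠ 0 := by nlinarith
    rw [hMdef, h1pq, hqdef]
    field_simp
    ring
  -- product over finsets
  have hprod : ∀ s : Finset ℕ, ∫⁻ ω, c ^ (∑ j ∈ s, ξ j ω) ∂ℙ = ENNReal.ofReal M ^ s.card := by
    intro s
    induction s using Finset.induction with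
    | empty => simp
    | @insert i s hi ih =>
      have h1 : IndepFun (ξ i) (∑ j ∈ s, ξ j) ℙ :=
        (hindep.indepFun_finsetSum_of_notMem hmeas hi).symm
      have h2 : IndepFun (fun ω => c ^ ξ i ω) (fun ω => c ^ ((∑ j ∈ s, ξ j) ω)) ℙ :=
        h1.comp measurable_from_top measurable_from_top
      have hfun : (fun ω => c ^ ((∑ j ∈ s, ξ j) ω)) = fun ω => c ^ (∑ j ∈ s, ξ j ω) := by
        funext ω; simp [Finset.sum_apply]
      rw [hfun] at h2
      calc ∫⁻ ω, c ^ (∑ j ∈ insert i s, ξ j ω) ∂ℙ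
          = ∫⁻ ω, ((fun ω => c ^ ξ i ω) * fun ω => c ^ (∑ j ∈ s, ξ j ω)) ω ∂ℙ := by
            apply lintegral_congr; intro ω
            simp [Finset.sum_insert hi, pow_add]
        _ = (∫⁻ ω, c ^ ξ i ω ∂ℙ) * ∫⁻ ω, c ^ (∑ j ∈ s, ξ j ω) ∂ℙ :=
            lintegral_mul_eq_lintegral_mul_lintegral_of_indepFun
              (measurable_from_top.comp (hmeas i))
              (measurable_from_top.comp (Finset.measurable_sum s (fun j _ => hmeas j))) h2
        _ = ENNReal.ofReal M ^ (insert i s).card := by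
            rw [hmgf i, ih, Finset.card_insert_of_notMem hi, pow_succ, mul_comm]
  -- Markov / Chernoff bound
  have hmarkov : ∀ (s : Finset ℕ) (r : ℕ),
      ℙ {ω | r ≤ ∑ j ∈ s, ξ j ω} ≤ ENNReal.ofReal (M ^ s.card / q ^ r) := by
    intro s r
    have hSmeas : Measurable fun ω => ∑ j ∈ s, ξ j ω := Finset.measurable_sum s (fun j _ => hmeas j)
    have key : c ^ r * ℙ {ω | r ≤ ∑ j ∈ s, ξ j ω} ≤ ENNReal.ofReal M ^ s.card := by
      rw [← hprod s]
      calc c ^ r * ℙ {ω | r ≤ ∑ j ∈ s, ξ j ω}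
          ≤ c ^ r * ℙ {ω | c ^ r ≤ c ^ (∑ j ∈ s, ξ j ω)} := by
            gcongr
            intro hω
            exact pow_le_pow_right' hc1 hω
        _ ≤ ∫⁻ ω, c ^ (∑ j ∈ s, ξ j ω) ∂ℙ :=
            mul_meas_ge_le_lintegral₀ ((measurable_from_top.comp hSmeas).aemeasurable) _
    have hcr0 : c ^ r ≠ 0 := by
      apply pow_ne_zero; rw [hcdef]; simp [ENNReal.ofReal_eq_zero]; linarith
    have hcrt : c ^ r ≠ ⊤ := by
      apply ENNReal.pow_ne_top; rw [hcdef]; exact ENNReal.ofReal_ne_top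
    have hdiv : ℙ {ω | r ≤ ∑ j ∈ s, ξ j ω} ≤ ENNReal.ofReal M ^ s.card / c ^ r := by
      rw [ENNReal.le_div_iff_mul_le (Or.inl hcr0) (Or.inl hcrt)]
      rwa [mul_comm]
    calc ℙ {ω | r ≤ ∑ j ∈ s, ξ j ω} ≤ ENNReal.ofReal M ^ s.card / c ^ r := hdiv
      _ = ENNReal.ofReal (M ^ s.card / q ^ r) := by
          rw [hcdef, ← ENNReal.ofReal_pow hM0, ← ENNReal.ofReal_pow hq0.le,
            ENNReal.ofReal_div_of_pos (by positivity)]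
  -- ceiling facts
  have hm1 : 1 ≤ ⌈ε * (n:ℝ)⌉₊ := Nat.ceil_pos.mpr hεn
  have hmge : (ε * n : ℝ) ≤ (⌈ε * (n:ℝ)⌉₊ : ℝ) := Nat.le_ceil _
  have hmlt : ((⌈ε * (n:ℝ)⌉₊ : ℝ)) < ε * n + 1 := Nat.ceil_lt_add_one (le_of_lt hεn)
  have hlog5 : 1 < Real.log 5 := by
    rw [Real.lt_log_iff_exp_lt (by norm_num)]
    exact lt_trans Real.exp_one_lt_d9 (by norm_num)
  have hexpE : 0 < Real.exp (-(1 - p) * ε * n / 8) := Real.exp_pos _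
  by_cases hcase : (1 - p) * ε * n / 8 ≤ Real.log 6
  · -- small case : trivial union bound
    have hsub : {ω | ⌈ε * (n:ℝ)⌉₊ ≤ ∑ i ∈ Finset.range n, ξ i ω}
        ⊆ ⋃ i ∈ Finset.range n, {ω | 1 ≤ ξ i ω} := by
      intro ω hω
      by_contra hcon
      simp only [Set.mem_iUnion, Set.mem_setOf_eq, not_exists] at hcon
      have hz : ∑ i ∈ Finset.range n, ξ i ω = 0 :=
        Finset.sum_eq_zero (fun i hi => by have := hcon i hi; omega)
      simp only [Set.mem_setOf_eq, hz] at hω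
      omega
    calc ℙ {ω | ⌈ε * (n:ℝ)⌉₊ ≤ ∑ i ∈ Finset.range n, ξ i ω}
        ≤ ∑ i ∈ Finset.range n, ℙ {ω | 1 ≤ ξ i ω} :=
          (measure_mono hsub).trans (measure_biUnion_finset_le _ _)
      _ = (n : ENNReal) * ENNReal.ofReal a := by
          have heach : ∀ i ∈ Finset.range n, ℙ {ω | 1 ≤ ξ i ω} = ENNReal.ofReal a := by
            intro i _
            rw [htaili i 1 le_rfl]
            norm_num
          rw [Finset.sum_congr rfl heach, Finset.sum_const, Finset.card_range, nsmul_eq_mul]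
      _ ≤ ENNReal.ofReal (6 * n * a * Real.exp (-(1 - p) * ε * n / 8)) := by
          rw [← ENNReal.ofReal_natCast, ← ENNReal.ofReal_mul (Nat.cast_nonneg n)]
          apply ENNReal.ofReal_le_ofReal
          have h7 : Real.exp ((1 - p) * ε * n / 8) ≤ 6 := by
            calc Real.exp ((1 - p) * ε * n / 8) ≤ Real.exp (Real.log 6) :=
                  Real.exp_le_exp.mpr hcase
              _ = 6 := Real.exp_log (by norm_num)
          have h6 : (6:ℝ)⁻¹ ≤ Real.exp (-(1 - p) * ε * n / 8) := by
            rw [show -(1 - p) * ε * (n:ℝ) / 8 = -((1 - p) * ε * n / 8) by ring, Real.exp_neg]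
            exact inv_anti₀ (Real.exp_pos _) h7
          nlinarith [mul_le_mul_of_nonneg_left h6 (show (0:ℝ) ≤ 6 * n * a by positivity)]
  · -- main case
    push_neg at hcase
    have h1log6 : 1 < Real.log 6 := by
      rw [Real.lt_log_iff_exp_lt (by norm_num)]
      exact lt_trans Real.exp_one_lt_d9 (by norm_num)
    have hεn8 : 8 < ε * n := by nlinarith
    obtain ⟨K, hKdef⟩ : ∃ k : ℕ, k = ⌈ε * n / 8⌉₊ := ⟨_, rfl⟩
    have hKge : ε * n / 8 ≤ (K : ℝ) := hKdef ▸ Nat.le_ceil _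
    have hKlt : (K : ℝ) < ε * n / 8 + 1 := hKdef ▸ Nat.ceil_lt_add_one (by positivity)
    obtain ⟨T, hTdef⟩ : ∃ t : ℕ, t = K + 1 := ⟨_, rfl⟩
    have hT1 : T - 1 = K := by omega
    have hTreal : (T : ℝ) ≤ ε * n / 8 + 2 := by
      rw [hTdef]; push_cast; linarith
    have hT1le : 1 ≤ T := by omega
    have hTm : T ≤ ⌈ε * (n:ℝ)⌉₊ := by
      have : (T : ℝ) ≤ (⌈ε * (n:ℝ)⌉₊ : ℝ) := by linarith
      exact_mod_cast this
    obtain ⟨r, hrdef⟩ : ∃ r : ℕ, r = ⌈ε * (n:ℝ)⌉₊ - T := ⟨_, rfl⟩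
    have hrreal : 7 * (ε * n) / 8 - 2 ≤ (r : ℝ) := by
      have hr2 : (r : ℝ) = (⌈ε * (n:ℝ)⌉₊ : ℝ) - (T : ℝ) := by
        rw [hrdef, Nat.cast_sub hTm]
      rw [hr2]; linarith
    have hr0 : (0:ℝ) ≤ (r:ℝ) := Nat.cast_nonneg r
    -- inclusion
    have hsub : {ω | ⌈ε * (n:ℝ)⌉₊ ≤ ∑ i ∈ Finset.range n, ξ i ω}
        ⊆ (⋃ i ∈ Finset.range n, {ω | T ≤ ξ i ω})
          ∪ ⋃ i ∈ Finset.range n,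
              ({ω | 1 ≤ ξ i ω} ∩ {ω | r ≤ ∑ j ∈ (Finset.range n).erase i, ξ j ω}) := by
      intro ω hω
      simp only [Set.mem_setOf_eq] at hω
      by_cases hbig : ∃ i ∈ Finset.range n, T ≤ ξ i ω
      · left
        obtain ⟨i, hi, hT⟩ := hbig
        simp only [Set.mem_iUnion, Set.mem_setOf_eq]
        exact ⟨i, hi, hT⟩
      · right
        push_neg at hbig
        have hpos : ∃ i ∈ Finset.range n, 1 ≤ ξ i ω := by
          by_contra hcon
          push_neg at hcon
          have hz : ∑ i ∈ Finset.range n, ξ i ω = 0 :=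
            Finset.sum_eq_zero (fun i hi => by have := hcon i hi; omega)
          rw [hz] at hω
          omega
        obtain ⟨i, hi, hipos⟩ := hpos
        have hsplit : ξ i ω + ∑ j ∈ (Finset.range n).erase i, ξ j ω
            = ∑ j ∈ Finset.range n, ξ j ω := Finset.add_sum_erase _ (fun j => ξ j ω) hi
        have hibound : ξ i ω < T := hbig i hi
        simp only [Set.mem_iUnion, Set.mem_inter_iff, Set.mem_setOf_eq]
        exact ⟨i, hi, hipos, by omega⟩
    -- per-index bounds
    have hbig_bound : ∀ i ∈ Finset.range n,
        ℙ {ω | T ≤ ξ i ω} = ENNReal.ofReal (a * p ^ K) := by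
      intro i _
      rw [htaili i T hT1le, hT1]
    have hcher : ∀ i ∈ Finset.range n,
        ℙ ({ω | 1 ≤ ξ i ω} ∩ {ω | r ≤ ∑ j ∈ (Finset.range n).erase i, ξ j ω})
          ≤ ENNReal.ofReal (a * (Real.exp (a * n) / q ^ r)) := by
      intro i hi
      have hind : IndepFun (ξ i) (∑ j ∈ (Finset.range n).erase i, ξ j) ℙ :=
        (hindep.indepFun_finsetSum_of_notMem hmeas (Finset.notMem_erase i _)).symm
      have hseteq : {ω | r ≤ ∑ j ∈ (Finset.range n).erase i, ξ j ω}
          = (∑ j ∈ (Finset.range n).erase i, ξ j) ⁻¹' {x | r ≤ x} := by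
        ext ω; simp [Finset.sum_apply]
      have hinter : ℙ ({ω | 1 ≤ ξ i ω} ∩ {ω | r ≤ ∑ j ∈ (Finset.range n).erase i, ξ j ω})
          = ℙ {ω | 1 ≤ ξ i ω} * ℙ {ω | r ≤ ∑ j ∈ (Finset.range n).erase i, ξ j ω} := by
        rw [show {ω | 1 ≤ ξ i ω} = ξ i ⁻¹' {x | 1 ≤ x} from rfl, hseteq]
        exact hind.measure_inter_preimage_eq_mul _ _ trivial trivial
      rw [hinter]
      have h1 : ℙ {ω | 1 ≤ ξ i ω} = ENNReal.ofReal a := by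
        rw [htaili i 1 le_rfl]; norm_num
      have hcard : ((Finset.range n).erase i).card ≤ n := by
        calc ((Finset.range n).erase i).card ≤ (Finset.range n).card :=
              Finset.card_le_card (Finset.erase_subset _ _)
          _ = n := Finset.card_range n
      have h2 : ℙ {ω | r ≤ ∑ j ∈ (Finset.range n).erase i, ξ j ω}
          ≤ ENNReal.ofReal (Real.exp (a * n) / q ^ r) := by
        refine (hmarkov _ r).trans (ENNReal.ofReal_le_ofReal ?_)
        apply div_le_div_of_nonneg_right ?_ (by positivity)
        calc M ^ ((Finset.range n).erase i).card
            ≤ Real.exp a ^ ((Finset.range n).erase i).card := pow_le_pow_left₀ hM0 hMexp _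
          _ = Real.exp (a * ((Finset.range n).erase i).card) := by
              rw [← Real.exp_nat_mul]; ring_nf
          _ ≤ Real.exp (a * n) := by
              apply Real.exp_le_exp.mpr
              have : (((Finset.range n).erase i).card : ℝ) ≤ (n : ℝ) := by exact_mod_cast hcard
              nlinarith
      rw [h1, ENNReal.ofReal_mul ha0.le]
      exact mul_le_mul_right h2 _
    -- assemble
    have hmain : ℙ {ω | ⌈ε * (n:ℝ)⌉₊ ≤ ∑ i ∈ Finset.range n, ξ i ω}
        ≤ (n : ENNReal) * ENNReal.ofReal (a * p ^ K)
          + (n : ENNReal) * ENNReal.ofReal (a * (Real.exp (a * n) / q ^ r)) := by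
      calc ℙ {ω | ⌈ε * (n:ℝ)⌉₊ ≤ ∑ i ∈ Finset.range n, ξ i ω}
          ≤ ℙ (⋃ i ∈ Finset.range n, {ω | T ≤ ξ i ω})
            + ℙ (⋃ i ∈ Finset.range n,
                ({ω | 1 ≤ ξ i ω} ∩ {ω | r ≤ ∑ j ∈ (Finset.range n).erase i, ξ j ω})) :=
            (measure_mono hsub).trans (measure_union_le _ _)
        _ ≤ (∑ i ∈ Finset.range n, ℙ {ω | T ≤ ξ i ω})
            + ∑ i ∈ Finset.range n,
                ℙ ({ω | 1 ≤ ξ i ω} ∩ {ω | r ≤ ∑ j ∈ (Finset.range n).erase i, ξ j ω}) :=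
            add_le_add (measure_biUnion_finset_le _ _) (measure_biUnion_finset_le _ _)
        _ ≤ (n : ENNReal) * ENNReal.ofReal (a * p ^ K)
            + (n : ENNReal) * ENNReal.ofReal (a * (Real.exp (a * n) / q ^ r)) := by
            apply add_le_add
            · rw [Finset.sum_congr rfl hbig_bound, Finset.sum_const, Finset.card_range,
                nsmul_eq_mul]
            · calc ∑ i ∈ Finset.range n,
                    ℙ ({ω | 1 ≤ ξ i ω} ∩ {ω | r ≤ ∑ j ∈ (Finset.range n).erase i, ξ j ω})
                  ≤ ∑ _i ∈ Finset.range n, ENNReal.ofReal (a * (Real.exp (a * n) / q ^ r)) :=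
                    Finset.sum_le_sum hcher
                _ = (n : ENNReal) * ENNReal.ofReal (a * (Real.exp (a * n) / q ^ r)) := by
                    rw [Finset.sum_const, Finset.card_range, nsmul_eq_mul]
    refine hmain.trans ?_
    rw [← ENNReal.ofReal_natCast n, ← ENNReal.ofReal_mul (Nat.cast_nonneg n),
      ← ENNReal.ofReal_mul (Nat.cast_nonneg n), ← ENNReal.ofReal_add (by positivity) (by positivity)]
    apply ENNReal.ofReal_le_ofReal
    -- key real estimates
    have hlq : (1 - p) / 3 ≤ Real.log q := by
      have h1 := Real.log_le_sub_one_of_pos (inv_pos.2 hq0)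
      rw [Real.log_inv] at h1
      have h3p : (0:ℝ) < 3 - p := by linarith
      have h4 : q⁻¹ = 2 / (3 - p) := by rw [hqdef, inv_div]
      have h6 : (1:ℝ) - 2 / (3 - p) = (1 - p) / (3 - p) := by field_simp; ring
      have h5 : (1 - p) / 3 ≤ 1 - 2 / (3 - p) := by
        rw [h6]
        exact div_le_div_of_nonneg_left h1p.le h3p (by linarith)
      rw [h4] at h1
      linarith
    have hqr : Real.exp ((r:ℝ) * ((1 - p) / 3)) ≤ q ^ r := by
      rw [← Real.exp_log hq0, ← Real.exp_nat_mul]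
      exact Real.exp_le_exp.mpr (mul_le_mul_of_nonneg_left hlq hr0)
    have hF1 : p ^ K ≤ Real.exp (-(1 - p) * ε * n / 8) := by
      have hpk : p ^ K = Real.exp ((K:ℝ) * Real.log p) := by
        rw [Real.exp_nat_mul, Real.exp_log hp0]
      rw [hpk]
      apply Real.exp_le_exp.mpr
      have hlp : Real.log p ≤ p - 1 := Real.log_le_sub_one_of_pos hp0
      have hK0 : (0:ℝ) ≤ K := Nat.cast_nonneg K
      nlinarith [mul_le_mul_of_nonneg_left hlp hK0]
    have hF2 : Real.exp (a * n) / q ^ r ≤ 5 * Real.exp (-(1 - p) * ε * n / 8) := by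
      have han : a * n ≤ ε * (1 - p) / 8 * n := by nlinarith
      have step : Real.exp (a * n) / q ^ r
          ≤ Real.exp (a * n) / Real.exp ((r:ℝ) * ((1 - p) / 3)) :=
        div_le_div_of_nonneg_left (Real.exp_pos _).le (Real.exp_pos _) hqr
      have heq : Real.exp (a * n) / Real.exp ((r:ℝ) * ((1 - p) / 3))
          = Real.exp (a * n - (r:ℝ) * ((1 - p) / 3)) := (Real.exp_sub _ _).symm
      have hle : a * n - (r:ℝ) * ((1 - p) / 3) ≤ Real.log 5 + (-(1 - p) * ε * n / 8) := by
        have hm1' := mul_le_mul_of_nonneg_left hrreal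
          (show (0:ℝ) ≤ (1 - p) / 3 from div_nonneg h1p.le (by norm_num))
        nlinarith [mul_pos h1p hεn, hm1']
      have hfin : Real.exp (a * n - (r:ℝ) * ((1 - p) / 3))
          ≤ 5 * Real.exp (-(1 - p) * ε * n / 8) := by
        calc Real.exp (a * n - (r:ℝ) * ((1 - p) / 3))
            ≤ Real.exp (Real.log 5 + (-(1 - p) * ε * n / 8)) := Real.exp_le_exp.mpr hle
          _ = 5 * Real.exp (-(1 - p) * ε * n / 8) := by
              rw [Real.exp_add, Real.exp_log (by norm_num : (0:ℝ) < 5)]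
      linarith [step, heq ▸ step]
    have hna : (0:ℝ) ≤ (n:ℝ) * a := by positivity
    have hA := mul_le_mul_of_nonneg_left hF1 hna
    have hB := mul_le_mul_of_nonneg_left hF2 hna
    ring_nf at hA hB ⊢
    linarith [hA, hB]
end

section
/- Let 0<a<1 and 1/3 ≤ p < 1, and suppose 1−p > (8/ε)a for some 0<ε<1. Let ξ_1,...,ξ_n be i.i.d. with P(ξ_1=0)=1−a and P(ξ_1 ≥ k) = a·p^{k−1} for k ≥ 1. Then for every integer k ≥ 1, P(Σ_{i=1}^n ξ_i ≥ k) ≤ 6·n·a·exp(−(1−p)k/(4p) + n·a/p). -/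
open MeasureTheory ProbabilityTheory Real

lemma aux_pow_expand (D : ENNReal) (m : ℕ) :
    (1 + D) ^ m = 1 + D * ∑ k ∈ Finset.range m, (1 + D) ^ k := by
  induction m with
  | zero => simp
  | succ m ih =>
    rw [pow_succ, ih, Finset.sum_range_succ, mul_add, add_mul, one_mul, add_mul, one_mul, ih]
    ring

lemma aux_exp_half (x : ℝ) (h0 : 0 ≤ x) (h1 : x ≤ 1) : Real.exp (x / 2) ≤ 1 + x := by
  have h2 : 1 - x / 2 ≤ Real.exp (-(x / 2)) := by
    have := Real.add_one_le_exp (-(x / 2)); linarith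
  have h3 : 0 < 1 - x / 2 := by linarith
  have h4 : Real.exp (x / 2) * (1 - x / 2) ≤ 1 := by
    have := mul_le_mul_of_nonneg_left h2 (Real.exp_nonneg (x / 2))
    rwa [← Real.exp_add, add_neg_cancel, Real.exp_zero] at this
  have h5 : Real.exp (x / 2) ≤ 1 / (1 - x / 2) := by
    rw [le_div_iff₀ h3]; linarith
  refine h5.trans ?_
  rw [div_le_iff₀ h3]; nlinarith

lemma aux_pow_sub {S : ENNReal} (hS0 : S ≠ 0) (hStop : S ≠ ⊤) (hS1 : 1 ≤ S) (j k : ℕ) :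
    (S⁻¹) ^ (k - j) ≤ S ^ j * (S⁻¹) ^ k := by
  have hcancel : ∀ m : ℕ, S ^ m * (S⁻¹) ^ m = 1 := by
    intro m; rw [← mul_pow, ENNReal.mul_inv_cancel hS0 hStop, one_pow]
  rcases le_or_gt j k with h | h
  · have hk : k = j + (k - j) := by omega
    refine le_of_eq ?_
    conv_rhs => rw [hk]
    rw [pow_add, ← mul_assoc, hcancel, one_mul]
  · have hkj : k - j = 0 := by omega
    have : j = k + (j - k) := by omega
    rw [hkj, pow_zero, this, pow_add, mul_assoc, mul_comm (S ^ (j - k)), ← mul_assoc, hcancel,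
      one_mul]
    exact one_le_pow_of_one_le' hS1 _

theorem stmt6 {Ω : Type*} [MeasureSpace Ω] [IsProbabilityMeasure (ℙ : Measure Ω)]
    (a p ε : ℝ) (ha0 : 0 < a) (ha1 : a < 1) (hp13 : 1 / 3 ≤ p) (hp1 : p < 1)
    (hε0 : 0 < ε) (hε1 : ε < 1) (hgap : 1 - p > (8 / ε) * a)
    (ξ : ℕ → Ω → ℕ) (hmeas : ∀ i, Measurable (ξ i))
    (hindep : iIndepFun ξ ℙ)
    (hident : ∀ i, Measure.map (ξ i) ℙ = Measure.map (ξ 0) ℙ)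
    (h0 : ℙ {ω | ξ 0 ω = 0} = ENNReal.ofReal (1 - a))
    (htail : ∀ k : ℕ, 1 ≤ k → ℙ {ω | k ≤ ξ 0 ω} = ENNReal.ofReal (a * p ^ (k - 1)))
    (n : ℕ) (hn : 1 ≤ n) :
    ∀ k : ℕ, 1 ≤ k →
      ℙ {ω | k ≤ ∑ i ∈ Finset.range n, ξ i ω}
        ≤ ENNReal.ofReal (6 * n * a * Real.exp (-(1 - p) * k / (4 * p) + n * a / p)) := by
  classical
  intro k hk
  have hp0 : 0 < p := by linarith
  set s : ℝ := (1 + p) / (2 * p) with hs_def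
  have hs1 : 1 ≤ s := by rw [hs_def, le_div_iff₀ (by linarith)]; linarith
  have hs0 : 0 ≤ s := by linarith
  have hs2 : s ≤ 2 := by rw [hs_def, div_le_iff₀ (by linarith)]; linarith
  have hsp : s * p = (1 + p) / 2 := by rw [hs_def]; field_simp
  have hsp1 : s * p < 1 := by rw [hsp]; linarith
  have hsp0 : 0 ≤ s * p := by positivity
  set S : ENNReal := ENNReal.ofReal s with hS_def
  have hS1 : (1 : ENNReal) ≤ S := by
    rw [hS_def, ← ENNReal.ofReal_one]; exact ENNReal.ofReal_le_ofReal hs1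
  have hS0 : S ≠ 0 := by
    intro h; rw [h] at hS1; simp at hS1
  have hStop : S ≠ ⊤ := ENNReal.ofReal_ne_top
  set D : ENNReal := ENNReal.ofReal ((1 - p) / (2 * p)) with hD_def
  have hSD : S = 1 + D := by
    rw [hS_def, hD_def, ← ENNReal.ofReal_one, ← ENNReal.ofReal_add (by norm_num) (div_nonneg (by linarith) (by linarith))]
    congr 1
    rw [hs_def]; field_simp; ring
  set M : ENNReal := ENNReal.ofReal (1 + a / p) with hM_def
  have hM1 : (1 : ENNReal) ≤ M := by
    rw [hM_def, ← ENNReal.ofReal_one]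
    exact ENNReal.ofReal_le_ofReal (by linarith [div_nonneg ha0.le hp0.le])
  -- tail for every i
  have htaili : ∀ i (m : ℕ), 1 ≤ m → ℙ {ω | m ≤ ξ i ω} = ENNReal.ofReal (a * p ^ (m - 1)) := by
    intro i m hm
    have h1 : {ω | m ≤ ξ i ω} = ξ i ⁻¹' {x | m ≤ x} := rfl
    have h2 : {ω | m ≤ ξ 0 ω} = ξ 0 ⁻¹' {x | m ≤ x} := rfl
    rw [h1, ← Measure.map_apply (hmeas i) MeasurableSet.of_discrete, hident i,
      Measure.map_apply (hmeas 0) MeasurableSet.of_discrete, ← h2]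
    exact htail m hm
  -- single variable moment
  have hone : ∀ i, ∫⁻ ω, S ^ ξ i ω ∂ℙ = M := by
    intro i
    have hint : ∀ ω, S ^ ξ i ω = 1 + D * ∑ l ∈ Finset.range (ξ i ω), S ^ l := by
      intro ω; rw [hSD]; exact aux_pow_expand D _
    have hmeassum : Measurable fun ω => ∑ l ∈ Finset.range (ξ i ω), S ^ l :=
      (measurable_from_nat (f := fun m => ∑ l ∈ Finset.range m, S ^ l)).comp (hmeas i)
    have hsetm : ∀ l : ℕ, MeasurableSet {ω | l + 1 ≤ ξ i ω} :=
      fun l => (hmeas i) MeasurableSet.of_discrete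
    have hindicator : ∀ ω, (∑ l ∈ Finset.range (ξ i ω), S ^ l)
        = ∑' l : ℕ, ({ω' | l + 1 ≤ ξ i ω'}.indicator (fun _ => S ^ l) ω) := by
      intro ω
      rw [tsum_eq_sum (s := Finset.range (ξ i ω))
        (fun l hl => Set.indicator_of_notMem (by simp at hl ⊢; omega) _)]
      refine Finset.sum_congr rfl fun l hl => ?_
      rw [Set.indicator_of_mem]
      simp at hl ⊢; omega
    have hinner : ∫⁻ ω, ∑ l ∈ Finset.range (ξ i ω), S ^ l ∂ℙ
        = ∑' l : ℕ, S ^ l * ℙ {ω | l + 1 ≤ ξ i ω} := by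
      simp_rw [hindicator]
      rw [lintegral_tsum fun l => (measurable_const.indicator (hsetm l)).aemeasurable]
      congr 1; funext l
      rw [lintegral_indicator_const (hsetm l)]
    have hterm : ∀ l : ℕ, S ^ l * ℙ {ω | l + 1 ≤ ξ i ω} = ENNReal.ofReal (a * (s * p) ^ l) := by
      intro l
      rw [htaili i (l + 1) (by omega)]
      simp only [Nat.add_sub_cancel]
      rw [hS_def, ← ENNReal.ofReal_pow hs0, ← ENNReal.ofReal_mul (by positivity)]
      congr 1; rw [mul_pow]; ring
    have hsum : ∑' l : ℕ, ENNReal.ofReal (a * (s * p) ^ l)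
        = ENNReal.ofReal (a * (1 - s * p)⁻¹) := by
      rw [← ENNReal.ofReal_tsum_of_nonneg (fun l => by positivity)
        ((summable_geometric_of_lt_one hsp0 hsp1).mul_left a)]
      congr 1
      rw [tsum_mul_left, tsum_geometric_of_lt_one hsp0 hsp1]
    calc ∫⁻ ω, S ^ ξ i ω ∂ℙ
        = ∫⁻ ω, (1 + D * ∑ l ∈ Finset.range (ξ i ω), S ^ l) ∂ℙ := lintegral_congr hint
      _ = 1 + D * ∫⁻ ω, ∑ l ∈ Finset.range (ξ i ω), S ^ l ∂ℙ := by
          rw [lintegral_add_left measurable_const, lintegral_const_mul D hmeassum,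
            lintegral_const, measure_univ, mul_one]
      _ = 1 + D * ENNReal.ofReal (a * (1 - s * p)⁻¹) := by
          rw [hinner]; congr 1; rw [tsum_congr hterm, hsum]
      _ = M := by
          rw [hD_def, ← ENNReal.ofReal_mul (div_nonneg (by linarith) (by linarith))]
          rw [hM_def]
          have h1sp : 1 - s * p = (1 - p) / 2 := by rw [hsp]; ring
          have : (1 - p) / (2 * p) * (a * (1 - s * p)⁻¹) = a / p := by
            have h1p : (1 : ℝ) - p ≠ 0 := by linarith
            have hpne : p ≠ 0 := ne_of_gt hp0
            rw [h1sp]; field_simp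
          rw [this, ← ENNReal.ofReal_one, ← ENNReal.ofReal_add (by norm_num)
            (div_nonneg ha0.le hp0.le)]
  -- product over finsets
  have hprod : ∀ T : Finset ℕ, ∫⁻ ω, S ^ (∑ l ∈ T, ξ l ω) ∂ℙ = M ^ T.card := by
    intro T
    induction T using Finset.induction_on with
    | empty => simp
    | insert i T hi ih =>
      have hfs : (fun ω => S ^ (∑ l ∈ T, ξ l ω)) = (fun m : ℕ => S ^ m) ∘ (∑ l ∈ T, ξ l) := by
        funext ω; simp [Finset.sum_apply]
      have hind : IndepFun (fun ω => S ^ ξ i ω) (fun ω => S ^ (∑ l ∈ T, ξ l ω)) ℙ := by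
        have h1 := (hindep.indepFun_finset_sum_of_notMem hmeas hi).symm
        have h2 := h1.comp (φ := fun m : ℕ => S ^ m) (ψ := fun m : ℕ => S ^ m)
          (measurable_from_nat : Measurable (fun m : ℕ => S ^ m))
          (measurable_from_nat : Measurable (fun m : ℕ => S ^ m))
        rwa [← hfs] at h2
      have hkey : ∀ ω, S ^ (∑ l ∈ insert i T, ξ l ω)
          = S ^ ξ i ω * S ^ (∑ l ∈ T, ξ l ω) := by
        intro ω; rw [Finset.sum_insert hi, pow_add]
      have hmg : Measurable fun ω => S ^ (∑ l ∈ T, ξ l ω) :=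
        measurable_from_nat.comp (Finset.measurable_sum T fun l _ => hmeas l)
      rw [lintegral_congr hkey,
        lintegral_mul_eq_lintegral_mul_lintegral_of_indepFun''
          ((show Measurable fun ω => S ^ ξ i ω from measurable_from_nat.comp (hmeas i)).aemeasurable)
          hmg.aemeasurable hind,
        hone i, ih, Finset.card_insert_of_notMem hi, pow_succ, mul_comm]
  -- Chernoff
  have hcher : ∀ (T : Finset ℕ) (m : ℕ),
      ℙ {ω | m ≤ ∑ l ∈ T, ξ l ω} ≤ S⁻¹ ^ m * M ^ T.card := by
    intro T m
    have hmg : Measurable fun ω => S ^ (∑ l ∈ T, ξ l ω) :=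
      measurable_from_nat.comp (Finset.measurable_sum T fun l _ => hmeas l)
    have hmono : {ω | m ≤ ∑ l ∈ T, ξ l ω} ⊆ {ω | S ^ m ≤ S ^ (∑ l ∈ T, ξ l ω)} :=
      fun ω hω => pow_le_pow_right₀ hS1 hω
    have h1 := mul_meas_ge_le_lintegral₀ (μ := ℙ) hmg.aemeasurable (S ^ m)
    rw [hprod T] at h1
    have h2 : S ^ m * ℙ {ω | m ≤ ∑ l ∈ T, ξ l ω} ≤ M ^ T.card :=
      le_trans (mul_le_mul_right (measure_mono hmono) _) h1
    calc ℙ {ω | m ≤ ∑ l ∈ T, ξ l ω}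
        = S⁻¹ ^ m * (S ^ m * ℙ {ω | m ≤ ∑ l ∈ T, ξ l ω}) := by
          rw [← mul_assoc, ← mul_pow, ENNReal.inv_mul_cancel hS0 hStop, one_pow, one_mul]
      _ ≤ S⁻¹ ^ m * M ^ T.card := mul_le_mul_right h2 _
  -- point masses
  have hpoint : ∀ i (j : ℕ), 1 ≤ j →
      ℙ {ω | ξ i ω = j} = ENNReal.ofReal (a * (1 - p) * p ^ (j - 1)) := by
    intro i j hj
    have hsplit : {ω | j ≤ ξ i ω} = {ω | ξ i ω = j} ∪ {ω | j + 1 ≤ ξ i ω} := by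
      ext ω; simp; omega
    have hdisj : Disjoint {ω | ξ i ω = j} {ω | j + 1 ≤ ξ i ω} := by
      rw [Set.disjoint_left]; intro ω h1 h2; simp only [Set.mem_setOf_eq] at h1 h2; omega
    have hm2 : MeasurableSet {ω | j + 1 ≤ ξ i ω} := (hmeas i) MeasurableSet.of_discrete
    have hadd : ℙ {ω | ξ i ω = j} + ℙ {ω | j + 1 ≤ ξ i ω} = ℙ {ω | j ≤ ξ i ω} := by
      rw [hsplit, measure_union hdisj hm2]
    rw [htaili i j hj, htaili i (j + 1) (by omega)] at hadd
    have := ENNReal.eq_sub_of_add_eq ENNReal.ofReal_ne_top hadd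
    rw [this, ← ENNReal.ofReal_sub _ (by positivity)]
    congr 1
    have hj' : (j + 1) - 1 = (j - 1) + 1 := by omega
    rw [hj', pow_succ]; ring
  -- the decomposition events
  set C : ℕ → ℕ → Set Ω := fun i j =>
    {ω | ξ i ω = j} ∩ {ω | k - j ≤ ∑ l ∈ (Finset.range n).erase i, ξ l ω} with hC_def
  have hsub : {ω | k ≤ ∑ i ∈ Finset.range n, ξ i ω}
      ⊆ ⋃ i ∈ Finset.range n, ⋃ j : ℕ, C i (j + 1) := by
    intro ω hω
    simp only [Set.mem_setOf_eq] at hω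
    have hex : ∃ i ∈ Finset.range n, 1 ≤ ξ i ω := by
      by_contra h
      push_neg at h
      have : ∑ i ∈ Finset.range n, ξ i ω = 0 :=
        Finset.sum_eq_zero fun i hi => by have := h i hi; omega
      omega
    obtain ⟨i, hi, hi1⟩ := hex
    have hsumsplit : ξ i ω + ∑ l ∈ (Finset.range n).erase i, ξ l ω
        = ∑ l ∈ Finset.range n, ξ l ω := Finset.add_sum_erase (Finset.range n) (fun l => ξ l ω) hi
    refine Set.mem_biUnion hi (Set.mem_iUnion.mpr ⟨ξ i ω - 1, ?_, ?_⟩)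
    · simp only [Set.mem_setOf_eq]; omega
    · simp only [Set.mem_setOf_eq]; omega
  -- independence factorization for the events
  have hfs : ∀ (T : Finset ℕ) (t : Set ℕ),
      (∑ l ∈ T, ξ l) ⁻¹' t = {ω | (∑ l ∈ T, ξ l ω) ∈ t} := by
    intro T t; ext ω; simp [Finset.sum_apply]
  have hCeq : ∀ i ∈ Finset.range n, ∀ j : ℕ,
      ℙ (C i j) = ℙ {ω | ξ i ω = j}
        * ℙ {ω | k - j ≤ ∑ l ∈ (Finset.range n).erase i, ξ l ω} := by
    intro i hi j
    have hind :=
      (hindep.indepFun_finset_sum_of_notMem hmeas (Finset.notMem_erase i (Finset.range n))).symm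
    have h := hind.measure_inter_preimage_eq_mul ({j} : Set ℕ) {x | k - j ≤ x}
      MeasurableSet.of_discrete MeasurableSet.of_discrete
    rw [hfs] at h
    exact h
  -- per-term bound
  set R : ℕ → ENNReal := fun j => ENNReal.ofReal (a * (1 - p) * s * (s * p) ^ j) with hR_def
  have hCb : ∀ i ∈ Finset.range n, ∀ j : ℕ,
      ℙ (C i (j + 1)) ≤ R j * (S⁻¹ ^ k * M ^ n) := by
    intro i hi j
    have hcard : ((Finset.range n).erase i).card ≤ n := by
      rw [Finset.card_erase_of_mem hi, Finset.card_range]; omega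
    calc ℙ (C i (j + 1))
        = ℙ {ω | ξ i ω = j + 1}
          * ℙ {ω | k - (j + 1) ≤ ∑ l ∈ (Finset.range n).erase i, ξ l ω} := hCeq i hi (j + 1)
      _ ≤ ENNReal.ofReal (a * (1 - p) * p ^ j)
          * (S⁻¹ ^ (k - (j + 1)) * M ^ ((Finset.range n).erase i).card) := by
          rw [hpoint i (j + 1) (by omega)]
          simp only [Nat.add_sub_cancel]
          exact mul_le_mul_right (hcher _ _) _
      _ ≤ ENNReal.ofReal (a * (1 - p) * p ^ j) * ((S ^ (j + 1) * S⁻¹ ^ k) * M ^ n) := by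
          exact mul_le_mul_right
            (mul_le_mul' (aux_pow_sub hS0 hStop hS1 (j + 1) k) (pow_le_pow_right₀ hM1 hcard)) _
      _ = (ENNReal.ofReal (a * (1 - p) * p ^ j) * S ^ (j + 1)) * (S⁻¹ ^ k * M ^ n) := by
          ring
      _ = R j * (S⁻¹ ^ k * M ^ n) := by
          congr 1
          rw [hR_def, hS_def, ← ENNReal.ofReal_pow hs0,
            ← ENNReal.ofReal_mul (mul_nonneg (mul_nonneg ha0.le (by linarith))
              (pow_nonneg hp0.le j))]
          congr 1
          rw [mul_pow]; ring
  have hRsum : ∑' j : ℕ, R j = ENNReal.ofReal (2 * a * s) := by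
    rw [hR_def]
    rw [← ENNReal.ofReal_tsum_of_nonneg
      (fun j => mul_nonneg (mul_nonneg (mul_nonneg ha0.le (by linarith)) hs0)
        (pow_nonneg hsp0 j))
      ((summable_geometric_of_lt_one hsp0 hsp1).mul_left _)]
    congr 1
    rw [tsum_mul_left, tsum_geometric_of_lt_one hsp0 hsp1]
    have h1sp : 1 - s * p = (1 - p) / 2 := by rw [hsp]; ring
    have h1p : (1 : ℝ) - p ≠ 0 := by linarith
    rw [h1sp]
    field_simp
  -- exponential bounds
  have hSk : S⁻¹ ^ k ≤ ENNReal.ofReal (Real.exp (-(1 - p) * k / (4 * p))) := by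
    have hx0 : 0 ≤ (1 - p) / (2 * p) := div_nonneg (by linarith) (by linarith)
    have hx1 : (1 - p) / (2 * p) ≤ 1 := by
      rw [div_le_one (by linarith)]; linarith
    have h1 := aux_exp_half _ hx0 hx1
    have heq : (1 - p) / (2 * p) / 2 = (1 - p) / (4 * p) := by ring
    have hs' : 1 + (1 - p) / (2 * p) = s := by rw [hs_def]; field_simp; ring
    rw [heq, hs'] at h1
    have h3 : ENNReal.ofReal (Real.exp ((1 - p) / (4 * p))) ≤ S :=
      ENNReal.ofReal_le_ofReal h1
    have h4 : S⁻¹ ≤ ENNReal.ofReal (Real.exp (-((1 - p) / (4 * p)))) := by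
      rw [Real.exp_neg, ENNReal.ofReal_inv_of_pos (Real.exp_pos _)]
      exact ENNReal.inv_le_inv' h3
    calc S⁻¹ ^ k ≤ ENNReal.ofReal (Real.exp (-((1 - p) / (4 * p)))) ^ k :=
          pow_le_pow_left₀ (by positivity) h4 k
      _ = ENNReal.ofReal (Real.exp (-(1 - p) * k / (4 * p))) := by
          rw [← ENNReal.ofReal_pow (Real.exp_nonneg _), ← Real.exp_nat_mul]
          congr 1
          push_cast
          ring
  have hMn : M ^ n ≤ ENNReal.ofReal (Real.exp (n * a / p)) := by
    have h1 : M ≤ ENNReal.ofReal (Real.exp (a / p)) := by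
      rw [hM_def]
      exact ENNReal.ofReal_le_ofReal (by have := Real.add_one_le_exp (a / p); linarith)
    calc M ^ n ≤ ENNReal.ofReal (Real.exp (a / p)) ^ n := pow_le_pow_left₀ (by positivity) h1 n
      _ = ENNReal.ofReal (Real.exp (n * a / p)) := by
        rw [← ENNReal.ofReal_pow (Real.exp_nonneg _), ← Real.exp_nat_mul]
        congr 1
        push_cast
        ring
  -- assemble
  calc ℙ {ω | k ≤ ∑ i ∈ Finset.range n, ξ i ω}
      ≤ ℙ (⋃ i ∈ Finset.range n, ⋃ j : ℕ, C i (j + 1)) := measure_mono hsub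
    _ ≤ ∑ i ∈ Finset.range n, ℙ (⋃ j : ℕ, C i (j + 1)) := measure_biUnion_finset_le _ _
    _ ≤ ∑ i ∈ Finset.range n, ENNReal.ofReal (2 * a * s) * (S⁻¹ ^ k * M ^ n) := by
        refine Finset.sum_le_sum fun i hi => ?_
        calc ℙ (⋃ j : ℕ, C i (j + 1)) ≤ ∑' j : ℕ, ℙ (C i (j + 1)) := measure_iUnion_le _
          _ ≤ ∑' j : ℕ, R j * (S⁻¹ ^ k * M ^ n) := ENNReal.tsum_le_tsum (hCb i hi)
          _ = (∑' j : ℕ, R j) * (S⁻¹ ^ k * M ^ n) := ENNReal.tsum_mul_right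
          _ = ENNReal.ofReal (2 * a * s) * (S⁻¹ ^ k * M ^ n) := by rw [hRsum]
    _ = (n : ENNReal) * (ENNReal.ofReal (2 * a * s) * (S⁻¹ ^ k * M ^ n)) := by
        rw [Finset.sum_const, Finset.card_range, nsmul_eq_mul]
    _ ≤ (n : ENNReal) * (ENNReal.ofReal (2 * a * s) *
        (ENNReal.ofReal (Real.exp (-(1 - p) * k / (4 * p)))
          * ENNReal.ofReal (Real.exp (n * a / p)))) := by
        exact mul_le_mul_right (mul_le_mul_right (mul_le_mul' hSk hMn) _) _
    _ = ENNReal.ofReal ((n : ℝ) * (2 * a * s *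
        (Real.exp (-(1 - p) * k / (4 * p)) * Real.exp (n * a / p)))) := by
        rw [← ENNReal.ofReal_mul (Real.exp_nonneg _), ← ENNReal.ofReal_mul (by positivity),
          ← ENNReal.ofReal_natCast n, ← ENNReal.ofReal_mul (by positivity)]
    _ ≤ ENNReal.ofReal (6 * n * a * Real.exp (-(1 - p) * k / (4 * p) + n * a / p)) := by
        apply ENNReal.ofReal_le_ofReal
        rw [Real.exp_add]
        have key : 2 * a * s ≤ 6 * a := by nlinarith
        calc (n : ℝ) * (2 * a * s *
            (Real.exp (-(1 - p) * k / (4 * p)) * Real.exp (n * a / p)))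
            = (2 * a * s) * ((n : ℝ) *
              (Real.exp (-(1 - p) * k / (4 * p)) * Real.exp (n * a / p))) := by ring
          _ ≤ (6 * a) * ((n : ℝ) *
              (Real.exp (-(1 - p) * k / (4 * p)) * Real.exp (n * a / p))) :=
              mul_le_mul_of_nonneg_right key (by positivity)
          _ = 6 * n * a * (Real.exp (-(1 - p) * k / (4 * p)) * Real.exp (n * a / p)) := by ring
end

section
/- Let 0<a<1 and 0<p ≤ 1/3. Let ξ_1,...,ξ_n be i.i.d. with P(ξ_1=0)=1−a and P(ξ_1 ≥ k) = a·p^{k−1} for k ≥ 1. Then for every integer k ≥ 1, P(Σ_{i=1}^n ξ_i ≥ k) ≤ 4·n·a·2^{−k}·exp(3·a·n). -/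
open MeasureTheory ProbabilityTheory Real
open scoped ENNReal

private lemma aux_pow_sub_s7 {x y : ℝ} (hy : 0 ≤ y) (hyx : y ≤ x) (hx : 1 ≤ x) :
    ∀ n : ℕ, x ^ n - y ^ n ≤ n * (x - y) * x ^ n := by
  intro n
  induction n with
  | zero => simp
  | succ n ih =>
    have hx0 : (0:ℝ) ≤ x := le_trans zero_le_one hx
    have hyxn : y ^ n ≤ x ^ n := pow_le_pow_left₀ hy hyx n
    have hxn : x ^ n ≤ x ^ (n + 1) := pow_le_pow_right₀ hx (Nat.le_succ n)
    have hxn0 : (0:ℝ) ≤ x ^ n := pow_nonneg hx0 n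
    calc x ^ (n+1) - y ^ (n+1) = x * (x ^ n - y ^ n) + (x - y) * y ^ n := by ring
      _ ≤ x * (n * (x - y) * x ^ n) + (x - y) * x ^ n := by
          gcongr
      _ = n * (x - y) * x ^ (n+1) + (x - y) * x ^ n := by ring
      _ ≤ (n+1 : ℕ) * (x - y) * x ^ (n+1) := by
          push_cast
          nlinarith

set_option maxHeartbeats 1000000 in
theorem stmt7 {Ω : Type*} [MeasureSpace Ω] [IsProbabilityMeasure (ℙ : Measure Ω)]
    (a p : ℝ) (ha0 : 0 < a) (ha1 : a < 1) (hp0 : 0 < p) (hp13 : p ≤ 1 / 3)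
    (ξ : ℕ → Ω → ℕ) (hmeas : ∀ i, Measurable (ξ i))
    (hindep : iIndepFun ξ ℙ)
    (hident : ∀ i, Measure.map (ξ i) ℙ = Measure.map (ξ 0) ℙ)
    (h0 : ℙ {ω | ξ 0 ω = 0} = ENNReal.ofReal (1 - a))
    (htail : ∀ k : ℕ, 1 ≤ k → ℙ {ω | k ≤ ξ 0 ω} = ENNReal.ofReal (a * p ^ (k - 1)))
    (n : ℕ) (hn : 1 ≤ n) :
    ∀ k : ℕ, 1 ≤ k →
      ℙ {ω | k ≤ ∑ i ∈ Finset.range n, ξ i ω}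
        ≤ ENNReal.ofReal (4 * n * a * (2 : ℝ)⁻¹ ^ k * Real.exp (3 * a * n)) := by
  intro k hk
  have h12p : (0:ℝ) < 1 - 2 * p := by linarith
  set E1 : ℝ := 1 - a + 2 * a * (1 - p) * (1 - 2 * p)⁻¹ with hE1def
  have hE1eq : E1 = 1 + a * (1 - 2 * p)⁻¹ := by
    rw [hE1def]; field_simp; ring
  have hinvnn : (0:ℝ) ≤ (1 - 2 * p)⁻¹ := (inv_pos.2 h12p).le
  have hinv3 : (1 - 2 * p)⁻¹ ≤ 3 := by
    nlinarith [mul_inv_cancel₀ (ne_of_gt h12p)]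
  have hE1ge : 1 ≤ E1 := by
    rw [hE1eq]; nlinarith
  have hE1le : E1 ≤ 1 + 3 * a := by
    rw [hE1eq]; nlinarith
  have hE1nn : (0:ℝ) ≤ E1 := by linarith
  have hg : Measurable (fun m : ℕ => (2:ℝ≥0∞) ^ m) := .of_discrete
  have hYmeas : ∀ m : ℕ, Measurable (fun ω => ∑ i ∈ Finset.range m, ξ i ω) :=
    fun m => Finset.measurable_sum _ (fun i _ => hmeas i)
  -- pmf values
  have hpm : ∀ j : ℕ, ℙ {ω | ξ 0 ω = j + 1} = ENNReal.ofReal (a * p ^ j * (1 - p)) := by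
    intro j
    have hsplit : {ω | (j+1:ℕ) ≤ ξ 0 ω} = {ω | ξ 0 ω = j+1} ∪ {ω | (j+2:ℕ) ≤ ξ 0 ω} := by
      ext ω; simp only [Set.mem_setOf_eq, Set.mem_union]; omega
    have hdisj : Disjoint {ω | ξ 0 ω = j+1} {ω | (j+2:ℕ) ≤ ξ 0 ω} := by
      rw [Set.disjoint_left]; intro ω h1 h2
      simp only [Set.mem_setOf_eq] at h1 h2; omega
    have hms : MeasurableSet {ω | (j+2:ℕ) ≤ ξ 0 ω} := (hmeas 0) .of_discrete
    have hu := measure_union (μ := ℙ) hdisj hms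
    rw [← hsplit, htail (j+1) (by omega), htail (j+2) (by omega)] at hu
    simp only [Nat.add_sub_cancel] at hu
    have h2' : (j + 2 - 1 : ℕ) = j + 1 := by omega
    rw [h2'] at hu
    have h2 : ℙ {ω | ξ 0 ω = j+1}
        = ENNReal.ofReal (a * p ^ j) - ENNReal.ofReal (a * p ^ (j+1)) :=
      ENNReal.eq_sub_of_add_eq (by simp) hu.symm
    rw [h2, ← ENNReal.ofReal_sub _ (by positivity)]
    congr 1; ring
  -- per-variable expectation
  have h2pow : ∀ j : ℕ, (2:ℝ≥0∞) ^ j = ENNReal.ofReal ((2:ℝ) ^ j) := by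
    intro j; rw [ENNReal.ofReal_pow (by norm_num)]; norm_num
  have hEi : ∀ i, ∫⁻ ω, (2:ℝ≥0∞) ^ (ξ i ω) ∂ℙ = ENNReal.ofReal E1 := by
    intro i
    rw [← lintegral_map hg (hmeas i), hident i, lintegral_countable']
    have hsing : ∀ m : ℕ, (Measure.map (ξ 0) ℙ) {m} = ℙ {ω | ξ 0 ω = m} := by
      intro m
      rw [Measure.map_apply (hmeas 0) (MeasurableSet.singleton m)]
      congr 1
    calc ∑' m : ℕ, (2:ℝ≥0∞) ^ m * (Measure.map (ξ 0) ℙ) {m}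
        = (2:ℝ≥0∞) ^ (0:ℕ) * ℙ {ω | ξ 0 ω = 0}
            + ∑' j : ℕ, (2:ℝ≥0∞) ^ (j+1) * ℙ {ω | ξ 0 ω = j+1} := by
          simp only [hsing]
          exact tsum_eq_zero_add' ENNReal.summable
      _ = ENNReal.ofReal (1 - a)
            + ∑' j : ℕ, ENNReal.ofReal ((2 * a * (1 - p)) * (2 * p) ^ j) := by
          rw [pow_zero, one_mul, h0]
          congr 1
          apply tsum_congr; intro j
          rw [hpm j, h2pow, ← ENNReal.ofReal_mul (by positivity)]
          congr 1
          rw [mul_pow, pow_succ]; ring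
      _ = ENNReal.ofReal (1 - a)
            + ENNReal.ofReal ((2 * a * (1 - p)) * (1 - 2 * p)⁻¹) := by
          congr 1
          rw [← ENNReal.ofReal_tsum_of_nonneg
            (fun j => mul_nonneg (by nlinarith) (pow_nonneg (by linarith) j))
            ((summable_geometric_of_lt_one (by linarith) (by linarith)).mul_left _)]
          congr 1
          rw [tsum_mul_left, tsum_geometric_of_lt_one (by linarith) (by linarith)]
      _ = ENNReal.ofReal E1 := by
          rw [← ENNReal.ofReal_add (by linarith) (by nlinarith), hE1def]
  -- expectation of the product
  have hEY : ∀ m : ℕ,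
      ∫⁻ ω, (2:ℝ≥0∞) ^ (∑ i ∈ Finset.range m, ξ i ω) ∂ℙ = ENNReal.ofReal E1 ^ m := by
    intro m
    induction m with
    | zero => simp
    | succ m ih =>
      have hind : IndepFun (∑ j ∈ Finset.range m, ξ j) (ξ m) ℙ :=
        hindep.indepFun_sum_range_succ hmeas m
      have hind2 := hind.comp hg hg
      calc ∫⁻ ω, (2:ℝ≥0∞) ^ (∑ i ∈ Finset.range (m+1), ξ i ω) ∂ℙ
          = ∫⁻ ω, (((fun x : ℕ => (2:ℝ≥0∞) ^ x) ∘ (∑ j ∈ Finset.range m, ξ j))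
              * ((fun x : ℕ => (2:ℝ≥0∞) ^ x) ∘ (ξ m))) ω ∂ℙ := by
            apply lintegral_congr; intro ω
            simp [Finset.sum_range_succ, pow_add, Finset.sum_apply]
        _ = (∫⁻ ω, ((fun x : ℕ => (2:ℝ≥0∞) ^ x) ∘ (∑ j ∈ Finset.range m, ξ j)) ω ∂ℙ)
              * ∫⁻ ω, ((fun x : ℕ => (2:ℝ≥0∞) ^ x) ∘ (ξ m)) ω ∂ℙ := by
            have hsumfn : (∑ j ∈ Finset.range m, ξ j)
                = (fun ω => ∑ j ∈ Finset.range m, ξ j ω) := by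
              ext ω; exact Finset.sum_apply _ _ _
            exact lintegral_mul_eq_lintegral_mul_lintegral_of_indepFun
              (hg.comp (by rw [hsumfn]; exact hYmeas m)) (hg.comp (hmeas m)) hind2
        _ = (∫⁻ ω, (2:ℝ≥0∞) ^ (∑ i ∈ Finset.range m, ξ i ω) ∂ℙ)
              * ∫⁻ ω, (2:ℝ≥0∞) ^ (ξ m ω) ∂ℙ := by
            congr 1
            apply lintegral_congr; intro ω
            simp [Finset.sum_apply]
        _ = ENNReal.ofReal E1 ^ (m+1) := by rw [ih, hEi m, pow_succ]
  -- probability of the sum being zero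
  have hP0 : ℙ {ω | ∑ i ∈ Finset.range n, ξ i ω = 0} = ENNReal.ofReal (1 - a) ^ n := by
    have hset : {ω | ∑ i ∈ Finset.range n, ξ i ω = 0} = ⋂ i ∈ Finset.range n, (ξ i ⁻¹' {0}) := by
      ext ω
      simp [Finset.sum_eq_zero_iff]
    rw [hset, hindep.meas_biInter (fun i _ => ⟨{0}, .of_discrete, rfl⟩)]
    have hone : ∀ i, ℙ (ξ i ⁻¹' {0}) = ENNReal.ofReal (1 - a) := by
      intro i
      rw [← Measure.map_apply (hmeas i) (MeasurableSet.singleton 0), hident i,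
        Measure.map_apply (hmeas 0) (MeasurableSet.singleton 0)]
      convert h0 using 2
      rfl
    simp [hone]
  -- main Chernoff-type bound
  set A := {ω | k ≤ ∑ i ∈ Finset.range n, ξ i ω} with hA
  set B := {ω | ∑ i ∈ Finset.range n, ξ i ω = 0} with hB
  have hBmeas : MeasurableSet B := by
    rw [hB]
    exact (hYmeas n) (MeasurableSet.of_discrete (s := ({0} : Set ℕ)))
  have hABdisj : Disjoint A B := by
    rw [Set.disjoint_left]; intro ω h1 h2
    rw [hA, Set.mem_setOf_eq] at h1
    rw [hB, Set.mem_setOf_eq] at h2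
    omega
  have key : (2:ℝ≥0∞) ^ k * ℙ A + ℙ B ≤ ENNReal.ofReal E1 ^ n := by
    calc (2:ℝ≥0∞) ^ k * ℙ A + ℙ B
        = (∫⁻ _ in A, (2:ℝ≥0∞) ^ k ∂ℙ) + ∫⁻ _ in B, 1 ∂ℙ := by
          rw [setLIntegral_const, setLIntegral_one]
      _ ≤ (∫⁻ ω in A, (2:ℝ≥0∞) ^ (∑ i ∈ Finset.range n, ξ i ω) ∂ℙ)
            + ∫⁻ ω in B, (2:ℝ≥0∞) ^ (∑ i ∈ Finset.range n, ξ i ω) ∂ℙ := by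
          apply add_le_add
          · apply setLIntegral_mono (hg.comp (hYmeas n))
            intro ω hω
            exact pow_le_pow_right₀ one_le_two hω
          · apply setLIntegral_mono (hg.comp (hYmeas n))
            intro ω hω
            calc (1:ℝ≥0∞) = 2 ^ (0:ℕ) := by norm_num
              _ ≤ _ := pow_le_pow_right₀ one_le_two (Nat.zero_le _)
      _ = ∫⁻ ω in A ∪ B, (2:ℝ≥0∞) ^ (∑ i ∈ Finset.range n, ξ i ω) ∂ℙ :=
          (lintegral_union hBmeas hABdisj).symm
      _ ≤ ∫⁻ ω, (2:ℝ≥0∞) ^ (∑ i ∈ Finset.range n, ξ i ω) ∂ℙ :=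
          setLIntegral_le_lintegral _ _
      _ = ENNReal.ofReal E1 ^ n := hEY n
  have hle2 : (2:ℝ≥0∞) ^ k * ℙ A ≤ ENNReal.ofReal (E1 ^ n - (1 - a) ^ n) := by
    have h1 : (2:ℝ≥0∞) ^ k * ℙ A ≤ ENNReal.ofReal E1 ^ n - ℙ B :=
      ENNReal.le_sub_of_add_le_right (measure_ne_top _ _) key
    rw [hP0, ← ENNReal.ofReal_pow hE1nn, ← ENNReal.ofReal_pow (by linarith)] at h1
    rwa [ENNReal.ofReal_sub _ (pow_nonneg (by linarith) n)]
  -- real-number estimate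
  have hreal : E1 ^ n - (1 - a) ^ n ≤ 4 * n * a * Real.exp (3 * a * n) := by
    have h1 := aux_pow_sub_s7 (x := E1) (y := 1 - a) (by linarith) (by linarith) hE1ge n
    have hE1exp : E1 ^ n ≤ Real.exp (3 * a * n) := by
      calc E1 ^ n ≤ (Real.exp (3 * a)) ^ n := by
            apply pow_le_pow_left₀ hE1nn
            have := Real.add_one_le_exp (3 * a)
            linarith
        _ = Real.exp (3 * a * n) := by rw [← Real.exp_nat_mul]; ring_nf
    have hd : E1 - (1 - a) ≤ 4 * a := by rw [hE1eq]; nlinarith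
    calc E1 ^ n - (1 - a) ^ n ≤ n * (E1 - (1 - a)) * E1 ^ n := h1
      _ ≤ n * (4 * a) * Real.exp (3 * a * n) := by
          have hdn : (0:ℝ) ≤ E1 - (1 - a) := by linarith
          have hEn : (0:ℝ) ≤ E1 ^ n := pow_nonneg hE1nn n
          gcongr
      _ = 4 * n * a * Real.exp (3 * a * n) := by ring
  -- conclude
  have h2k : ((2:ℝ≥0∞) ^ k)⁻¹ = ENNReal.ofReal ((2:ℝ)⁻¹ ^ k) := by
    rw [inv_pow, ENNReal.ofReal_inv_of_pos (by positivity), ENNReal.ofReal_pow (by norm_num)]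
    norm_num
  calc ℙ A = ((2:ℝ≥0∞) ^ k)⁻¹ * ((2:ℝ≥0∞) ^ k * ℙ A) := by
        rw [← mul_assoc, ENNReal.inv_mul_cancel (by positivity)
          (ENNReal.pow_ne_top ENNReal.ofNat_ne_top), one_mul]
    _ ≤ ((2:ℝ≥0∞) ^ k)⁻¹ * ENNReal.ofReal (4 * n * a * Real.exp (3 * a * n)) :=
        mul_le_mul_right (le_trans hle2 (ENNReal.ofReal_le_ofReal hreal)) _
    _ = ENNReal.ofReal ((2:ℝ)⁻¹ ^ k * (4 * n * a * Real.exp (3 * a * n))) := by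
        rw [h2k, ← ENNReal.ofReal_mul (by positivity)]
    _ = ENNReal.ofReal (4 * n * a * (2:ℝ)⁻¹ ^ k * Real.exp (3 * a * n)) := by
        congr 1; ring
end

section
/- Let (S_n) be a random walk on ℝ with i.i.d. increments, S_0 = 0. Define the first strictly ascending ladder epoch H_1 := inf{ℓ > 0 : S_ℓ > 0} and for λ > 0 let S_ℓ^# := max_{1 ≤ i ≤ ℓ}(max_{1 ≤ j ≤ i} S_j − S_i). Then for every integer i ≥ 1, P(S_{H_{i−1}}^# ≤ λ) ≤ (P(S_{H_1}^# ≤ λ))^{i−1}, where H_0 := 0 and H_i := inf{ℓ > H_{i−1} : S_ℓ > max_{0 ≤ j ≤ H_{i−1}} S_j}. -/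
open MeasureTheory ProbabilityTheory Real

/-- Running maximum `max_{1 ≤ i ≤ k} S i` (equals `0` when `k = 0`). -/
noncomputable def runMax (S : ℕ → ℝ) (k : ℕ) : ℝ := ⨆ i ∈ Finset.Icc 1 k, S i

/-- Maximal drawdown `S_k^# = max_{1 ≤ i ≤ k} (max_{1 ≤ j ≤ i} S j − S i)`. -/
noncomputable def drawdownMax (S : ℕ → ℝ) (k : ℕ) : ℝ :=
  ⨆ i ∈ Finset.Icc 1 k, (runMax S i - S i)

/-- Strictly ascending ladder epochs of the walk `S`. -/
noncomputable def ladder (S : ℕ → ℝ) : ℕ → ℕ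
  | 0 => 0
  | i + 1 => sInf {ℓ | ladder S i < ℓ ∧ ∀ j ≤ ladder S i, S j < S ℓ}

/- ### sup helpers -/

lemma aux_bsup_le {k : ℕ} {c : ℝ} (hc : 0 ≤ c) {f : ℕ → ℝ}
    (h : ∀ i ∈ Finset.Icc 1 k, f i ≤ c) : (⨆ i ∈ Finset.Icc 1 k, f i) ≤ c := by
  refine Real.iSup_le (fun i => Real.iSup_le (fun hi => h i hi) hc) hc

lemma aux_bdd {k : ℕ} (f : ℕ → ℝ) :
    BddAbove (Set.range fun i => ⨆ _ : i ∈ Finset.Icc 1 k, f i) := by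
  apply Set.Finite.bddAbove
  apply Set.Finite.subset (Set.Finite.insert 0 ((Finset.Icc 1 k).finite_toSet.image f))
  rintro x ⟨i, rfl⟩
  simp only []
  by_cases hi : i ∈ Finset.Icc 1 k
  · rw [ciSup_pos hi]; exact Set.mem_insert_of_mem _ ⟨i, hi, rfl⟩
  · rw [ciSup_neg hi, Real.sSup_empty]; exact Set.mem_insert _ _

lemma aux_le_bsup {k : ℕ} {f : ℕ → ℝ} {i : ℕ} (hi : i ∈ Finset.Icc 1 k) :
    f i ≤ ⨆ i ∈ Finset.Icc 1 k, f i := by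
  have := le_ciSup (aux_bdd (k := k) f) i
  rwa [ciSup_pos hi] at this

lemma aux_bsup_nonneg {k : ℕ} (f : ℕ → ℝ) : 0 ≤ ⨆ i ∈ Finset.Icc 1 k, f i := by
  have := le_ciSup (aux_bdd (k := k) f) (k + 1)
  have hk : (k+1) ∉ Finset.Icc 1 k := by simp
  rwa [ciSup_neg hk, Real.sSup_empty] at this

lemma aux_bsup_le_iff {k : ℕ} {c : ℝ} (hc : 0 ≤ c) {f : ℕ → ℝ} :
    (⨆ i ∈ Finset.Icc 1 k, f i) ≤ c ↔ ∀ i ∈ Finset.Icc 1 k, f i ≤ c :=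
  ⟨fun h i hi => (aux_le_bsup hi).trans h, aux_bsup_le hc⟩

lemma runMax_le_iff {s : ℕ → ℝ} {k : ℕ} {c : ℝ} :
    runMax s k ≤ c ↔ (0 ≤ c ∧ ∀ j ∈ Finset.Icc 1 k, s j ≤ c) := by
  constructor
  · intro h
    have h0 : (0:ℝ) ≤ c := (aux_bsup_nonneg s).trans h
    exact ⟨h0, fun j hj => (aux_le_bsup hj).trans h⟩
  · rintro ⟨h0, h⟩; exact aux_bsup_le h0 h

lemma le_runMax {s : ℕ → ℝ} {k j : ℕ} (hj : j ∈ Finset.Icc 1 k) : s j ≤ runMax s k :=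
  aux_le_bsup hj

lemma runMax_nonneg (s : ℕ → ℝ) (k : ℕ) : 0 ≤ runMax s k := aux_bsup_nonneg s

lemma drawdown_le_iff {s : ℕ → ℝ} {k : ℕ} {c : ℝ} (hc : 0 ≤ c) :
    drawdownMax s k ≤ c ↔ ∀ i ∈ Finset.Icc 1 k, runMax s i - s i ≤ c :=
  aux_bsup_le_iff hc

lemma drawdown_zero_le {s : ℕ → ℝ} {c : ℝ} (hc : 0 ≤ c) : drawdownMax s 0 ≤ c := by
  refine aux_bsup_le hc fun i hi => absurd hi (by simp)

/- ### congruence lemmas -/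

lemma runMax_congr {s s' : ℕ → ℝ} {k : ℕ} (h : ∀ j ≤ k, s j = s' j) :
    runMax s k = runMax s' k := by
  unfold runMax
  congr 1
  funext i
  by_cases hi : i ∈ Finset.Icc 1 k
  · rw [ciSup_pos hi, ciSup_pos hi, h i (Finset.mem_Icc.mp hi).2]
  · rw [ciSup_neg hi, ciSup_neg hi]

lemma drawdown_congr {s s' : ℕ → ℝ} {k : ℕ} (h : ∀ j ≤ k, s j = s' j) :
    drawdownMax s k = drawdownMax s' k := by
  unfold drawdownMax
  congr 1
  funext i
  by_cases hi : i ∈ Finset.Icc 1 k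
  · have hik := (Finset.mem_Icc.mp hi).2
    rw [ciSup_pos hi, ciSup_pos hi, h i hik, runMax_congr (fun j hj => h j (hj.trans hik))]
  · rw [ciSup_neg hi, ciSup_neg hi]

/- ### ladder chain -/

def IsLadderUpTo (s : ℕ → ℝ) : ℕ → ℕ → Prop
  | 0, t => t = 0
  | k+1, t => ∃ u, IsLadderUpTo s k u ∧ (u < t ∧ ∀ j ≤ u, s j < s t) ∧
      ∀ m' < t, ¬(u < m' ∧ ∀ j ≤ u, s j < s m')

lemma ladder_succ (s : ℕ → ℝ) (k : ℕ) :
    ladder s (k+1) = sInf {ℓ | ladder s k < ℓ ∧ ∀ j ≤ ladder s k, s j < s ℓ} := rfl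

lemma chain_ladder {s : ℕ → ℝ} : ∀ {k t : ℕ}, IsLadderUpTo s k t → ladder s k = t := by
  intro k
  induction k with
  | zero => intro t ht; exact ht.symm ▸ rfl
  | succ k ih =>
    rintro t ⟨u, hu, hmem, hmin⟩
    have hk : ladder s k = u := ih hu
    rw [ladder_succ, hk]
    have hne : {ℓ | u < ℓ ∧ ∀ j ≤ u, s j < s ℓ}.Nonempty := ⟨t, hmem⟩
    have h1 : sInf {ℓ | u < ℓ ∧ ∀ j ≤ u, s j < s ℓ} ≤ t := Nat.sInf_le hmem
    rcases lt_or_eq_of_le h1 with h | h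
    · exact absurd (Nat.sInf_mem hne) (hmin _ h)
    · exact h

lemma ladder_chain {s : ℕ → ℝ}
    (hne : ∀ k, {ℓ | ladder s k < ℓ ∧ ∀ j ≤ ladder s k, s j < s ℓ}.Nonempty) :
    ∀ k, IsLadderUpTo s k (ladder s k) := by
  intro k
  induction k with
  | zero => rfl
  | succ k ih =>
    refine ⟨ladder s k, ih, ?_, ?_⟩
    · have := Nat.sInf_mem (hne k)
      rwa [← ladder_succ] at this
    · intro m' hm'
      rw [ladder_succ] at hm'
      exact Nat.notMem_of_lt_sInf hm'

lemma chain_congr {s s' : ℕ → ℝ} : ∀ {k t : ℕ}, (∀ j ≤ t, s j = s' j) →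
    IsLadderUpTo s k t → IsLadderUpTo s' k t := by
  intro k
  induction k with
  | zero => intro t _ ht; exact ht
  | succ k ih =>
    rintro t h ⟨u, hu, ⟨hut, hmem⟩, hmin⟩
    have hut' := hut.le
    refine ⟨u, ih (fun j hj => h j (hj.trans hut')) hu, ⟨hut, fun j hj => ?_⟩, ?_⟩
    · rw [← h j (hj.trans hut'), ← h t le_rfl]; exact hmem j hj
    · intro m' hm' ⟨hum', hall⟩
      refine hmin m' hm' ⟨hum', fun j hj => ?_⟩
      rw [h j (hj.trans (hut'.trans (le_refl t))), h m' hm'.le]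
      · exact hall j hj

/- ### good walk facts -/

section Good
variable {s : ℕ → ℝ}
  (hne : ∀ k, {ℓ | ladder s k < ℓ ∧ ∀ j ≤ ladder s k, s j < s ℓ}.Nonempty)

include hne

lemma ladder_mem (k : ℕ) :
    ladder s k < ladder s (k+1) ∧ ∀ j ≤ ladder s k, s j < s (ladder s (k+1)) := by
  have := Nat.sInf_mem (hne k)
  rwa [← ladder_succ] at this

lemma ladder_weakmax (hs0 : s 0 = 0) : ∀ n, ∀ j ≤ ladder s n, s j ≤ s (ladder s n) := by
  intro n
  induction n with
  | zero =>
    intro j hj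
    have h0 : ladder s 0 = 0 := rfl
    rw [h0] at hj ⊢
    have : j = 0 := Nat.le_zero.mp hj
    subst this; rfl
  | succ n ih =>
    intro j hj
    rcases eq_or_lt_of_le hj with rfl | hjlt
    · rfl
    rcases le_or_gt j (ladder s n) with hj2 | hj2
    · exact ((ladder_mem hne n).2 j hj2).le
    · have hnot : j ∉ {ℓ | ladder s n < ℓ ∧ ∀ j' ≤ ladder s n, s j' < s ℓ} := by
        rw [ladder_succ] at hjlt
        exact Nat.notMem_of_lt_sInf hjlt
      simp only [Set.mem_setOf_eq, not_and, not_forall, not_lt] at hnot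
      obtain ⟨j', hj', hsj'⟩ := hnot hj2
      exact hsj'.trans (((ladder_mem hne n).2 j' hj').le)

/-- covering lemma: on the good set, if the drawdown up to `ladder (n+1)` is `≤ lam` then
the chain conditions and drawdown bounds for both the initial segment and the shifted walk hold. -/
lemma shift_cover (hs0 : s 0 = 0) {lam : ℝ} (hlam : 0 < lam) (n : ℕ)
    (hD : drawdownMax s (ladder s (n+1)) ≤ lam) :
    IsLadderUpTo s n (ladder s n) ∧ drawdownMax s (ladder s n) ≤ lam ∧
    IsLadderUpTo (fun j => s (ladder s n + j) - s (ladder s n)) 1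
      (ladder s (n+1) - ladder s n) ∧
    drawdownMax (fun j => s (ladder s n + j) - s (ladder s n))
      (ladder s (n+1) - ladder s n) ≤ lam := by
  set t := ladder s n with htdef
  set L := ladder s (n+1) with hLdef
  have htL : t < L := (ladder_mem hne n).1
  have hgt : ∀ j ≤ t, s j < s L := (ladder_mem hne n).2
  have hwk : ∀ j ≤ t, s j ≤ s t := ladder_weakmax hne hs0 n
  have htLe : t + (L - t) = L := by omega
  have hDle : ∀ i ∈ Finset.Icc 1 L, runMax s i - s i ≤ lam :=
    (drawdown_le_iff hlam.le).mp hD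
  refine ⟨ladder_chain hne n, ?_, ?_, ?_⟩
  · exact (drawdown_le_iff hlam.le).mpr fun i hi => hDle i
      (Finset.mem_Icc.mpr ⟨(Finset.mem_Icc.mp hi).1, (Finset.mem_Icc.mp hi).2.trans htL.le⟩)
  · -- chain for shifted walk at stage 1
    refine ⟨0, rfl, ⟨by omega, fun j hj => ?_⟩, ?_⟩
    · have hj0 : j = 0 := Nat.le_zero.mp hj
      subst hj0
      simp only [Nat.add_zero, htLe]
      have := hgt t le_rfl
      linarith
    · rintro m' hm' ⟨hm'0, hall⟩
      have hst : s t < s (t + m') := by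
        have := hall 0 le_rfl
        simp only [Nat.add_zero] at this
        linarith
      have hmem : t + m' ∈ {ℓ | t < ℓ ∧ ∀ j ≤ t, s j < s ℓ} := by
        refine ⟨by omega, fun j hj => lt_of_le_of_lt (hwk j hj) hst⟩
      have : L ≤ t + m' := by
        rw [hLdef, ladder_succ]
        exact Nat.sInf_le hmem
      omega
  · -- drawdown bound for shifted walk
    refine (drawdown_le_iff hlam.le).mpr fun a ha => ?_
    obtain ⟨ha1, haL⟩ := Finset.mem_Icc.mp ha
    have hta : t + a ∈ Finset.Icc 1 L := Finset.mem_Icc.mpr ⟨by omega, by omega⟩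
    have hrun : runMax s (t + a) - s (t + a) ≤ lam := hDle _ hta
    have hst_le : s t ≤ runMax s (t + a) := by
      rcases Nat.eq_zero_or_pos t with ht0 | ht0
      · rw [ht0, hs0]; rw [ht0] at *; exact runMax_nonneg s (0 + a)
      · exact le_runMax (Finset.mem_Icc.mpr ⟨ht0, by omega⟩)
    have key : runMax (fun j => s (t + j) - s t) a ≤ (s (t + a) - s t) + lam := by
      refine runMax_le_iff.mpr ⟨by linarith, fun b hb => ?_⟩
      obtain ⟨hb1, hba⟩ := Finset.mem_Icc.mp hb
      have : s (t + b) ≤ runMax s (t + a) :=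
        le_runMax (Finset.mem_Icc.mpr ⟨by omega, by omega⟩)
      show s (t + b) - s t ≤ _
      linarith
    show runMax _ a - (s (t + a) - s t) ≤ lam
    linarith

end Good

/- ### measurability -/

section Meas
variable {α : Type*} [MeasurableSpace α] {f : ℕ → α → ℝ}

lemma meas_chain (hf : ∀ j, Measurable (f j)) :
    ∀ (k t : ℕ), MeasurableSet {v | IsLadderUpTo (fun j => f j v) k t} := by
  have hS : ∀ u t : ℕ, MeasurableSet {v | u < t ∧ ∀ j ≤ u, f j v < f t v} := by
    intro u t
    by_cases h : u < t
    · have : {v | u < t ∧ ∀ j ≤ u, f j v < f t v}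
          = ⋂ j, ⋂ _ : j ≤ u, {v | f j v < f t v} := by
        ext v; simp [h]
      rw [this]
      exact MeasurableSet.iInter fun j => MeasurableSet.iInter fun _ =>
        measurableSet_lt (hf j) (hf t)
    · have : {v | u < t ∧ ∀ j ≤ u, f j v < f t v} = ∅ := by
        ext v; simp [h]
      rw [this]; exact MeasurableSet.empty
  intro k
  induction k with
  | zero =>
    intro t
    by_cases h : t = 0
    · have he : {v : α | IsLadderUpTo (fun j => f j v) 0 t} = Set.univ := by
        ext v; simp [IsLadderUpTo, h]
      rw [he]; exact MeasurableSet.univ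
    · have he : {v : α | IsLadderUpTo (fun j => f j v) 0 t} = ∅ := by
        ext v; simp [IsLadderUpTo, h]
      rw [he]; exact MeasurableSet.empty
  | succ k ih =>
    intro t
    have : {v | IsLadderUpTo (fun j => f j v) (k+1) t}
        = ⋃ u, ({v | IsLadderUpTo (fun j => f j v) k u}
            ∩ ({v | u < t ∧ ∀ j ≤ u, f j v < f t v}
            ∩ ⋂ m', ⋂ _ : m' < t, {v | u < m' ∧ ∀ j ≤ u, f j v < f m' v}ᶜ)) := by
      ext v
      simp only [Set.mem_setOf_eq, Set.mem_iUnion, Set.mem_inter_iff, Set.mem_iInter,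
        Set.mem_compl_iff, IsLadderUpTo]
    rw [this]
    exact MeasurableSet.iUnion fun u => (ih u).inter ((hS u t).inter
      (MeasurableSet.iInter fun m' => MeasurableSet.iInter fun _ => (hS u m').compl))

lemma meas_drawdown (hf : ∀ j, Measurable (f j)) {lam : ℝ} (hlam : 0 ≤ lam) (t : ℕ) :
    MeasurableSet {v | drawdownMax (fun j => f j v) t ≤ lam} := by
  have : {v | drawdownMax (fun j => f j v) t ≤ lam}
      = ⋂ i, ⋂ _ : i ∈ Finset.Icc 1 t, ({v | 0 ≤ lam + f i v}
          ∩ ⋂ j, ⋂ _ : j ∈ Finset.Icc 1 i, {v | f j v ≤ lam + f i v}) := by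
    ext v
    simp only [Set.mem_setOf_eq, Set.mem_iInter, Set.mem_inter_iff]
    rw [drawdown_le_iff hlam]
    constructor
    · intro h i hi
      have := h i hi
      rw [sub_le_iff_le_add] at this
      have h2 := runMax_le_iff.mp this
      exact ⟨h2.1, fun j hj => h2.2 j hj⟩
    · intro h i hi
      rw [sub_le_iff_le_add]
      exact runMax_le_iff.mpr ⟨(h i hi).1, fun j hj => (h i hi).2 j hj⟩
  rw [this]
  refine MeasurableSet.iInter fun i => MeasurableSet.iInter fun _ => ?_
  refine MeasurableSet.inter ?_ (MeasurableSet.iInter fun j => MeasurableSet.iInter fun _ => ?_)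
  · exact measurableSet_le measurable_const ((hf i).const_add lam)
  · exact measurableSet_le (hf j) ((hf i).const_add lam)

end Meas

/- ### probability: iid vectors -/

section Prob
variable {Ω : Type*} [MeasureSpace Ω] [IsProbabilityMeasure (ℙ : Measure Ω)]
  {X : ℕ → Ω → ℝ}

lemma aux_map_pi (hX : ∀ n, Measurable (X n))
    (hind : iIndepFun X ℙ)
    (hid : ∀ n, Measure.map (X n) ℙ = Measure.map (X 0) ℙ) (t m : ℕ) :
    Measure.map (fun ω (k : Fin m) => X (t + k) ω) ℙ
      = Measure.pi (fun _ : Fin m => Measure.map (X 0) ℙ) := by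
  have hXm : ∀ n, AEMeasurable (X n) ℙ := fun n => (hX n).aemeasurable
  have hprob : ∀ n, IsProbabilityMeasure (Measure.map (X n) ℙ) :=
    fun n => Measure.isProbabilityMeasure_map (hXm n)
  have hVmeas : Measurable (fun ω (k : Fin m) => X (t + k) ω) :=
    measurable_pi_lambda _ fun k => hX _
  refine (Measure.pi_eq fun s hs => ?_).symm
  rw [Measure.map_apply hVmeas (MeasurableSet.univ_pi hs)]
  -- rewrite preimage as finite intersection
  set T : Finset ℕ := Finset.image (fun k => t + k) (Finset.range m) with hT
  classical
  set sets : ℕ → Set ℝ := fun j =>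
    if h : t ≤ j ∧ j < t + m then s ⟨j - t, by omega⟩ else Set.univ with hsets
  have hsets_meas : ∀ j, MeasurableSet (sets j) := by
    intro j
    by_cases h : t ≤ j ∧ j < t + m
    · simp only [hsets, dif_pos h]; exact hs _
    · simp only [hsets, dif_neg h]; exact MeasurableSet.univ
  have hsets_tk : ∀ k : Fin m, sets (t + k) = s k := by
    intro k
    have h : t ≤ t + (k : ℕ) ∧ t + (k : ℕ) < t + m := ⟨by omega, by omega⟩
    simp only [hsets, dif_pos h]
    congr 1
    ext
    simp
  have hpre : (fun ω (k : Fin m) => X (t + k) ω) ⁻¹' Set.pi Set.univ s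
      = ⋂ i ∈ T, X i ⁻¹' sets i := by
    ext ω
    simp only [Set.mem_preimage, Set.mem_univ_pi, Set.mem_iInter, hT, Finset.mem_image,
      Finset.mem_range]
    constructor
    · rintro h i ⟨k, hk, rfl⟩
      rw [hsets_tk ⟨k, hk⟩]
      exact h ⟨k, hk⟩
    · intro h k
      have := h (t + (k : ℕ)) ⟨k, k.isLt, rfl⟩
      rwa [hsets_tk k] at this
  rw [hpre, hind.measure_inter_preimage_eq_mul T (fun i _ => hsets_meas i)]
  rw [hT, Finset.prod_image (fun a _ b _ h => by simp only [add_right_inj] at h; exact h)]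
  rw [← Fin.prod_univ_eq_prod_range (fun k => ℙ (X (t + k) ⁻¹' sets (t + k))) m]
  refine Finset.prod_congr rfl fun k _ => ?_
  rw [hsets_tk k, ← hid (t + (k : ℕ)), Measure.map_apply (hX _) (hs k)]

end Prob

lemma aux_indep {Ω : Type*} [MeasureSpace Ω] [IsProbabilityMeasure (ℙ : Measure Ω)]
    {X : ℕ → Ω → ℝ} (hX : ∀ n, Measurable (X n))
    (hind : iIndepFun X ℙ) (t m : ℕ) :
    IndepFun (fun ω (k : Fin t) => X (k : ℕ) ω) (fun ω (k : Fin m) => X (t + k) ω) ℙ := by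
  classical
  set T : Finset ℕ := Finset.image (fun k => t + k) (Finset.range m) with hT
  have hdisj : Disjoint (Finset.range t) T := by
    rw [Finset.disjoint_left]
    intro a ha hb
    rw [Finset.mem_range] at ha
    rw [hT, Finset.mem_image] at hb
    obtain ⟨k, _, rfl⟩ := hb
    omega
  have h1 := hind.indepFun_finset (Finset.range t) T hdisj hX
  have hφ : Measurable (fun (x : {i // i ∈ Finset.range t} → ℝ) (k : Fin t) =>
      x ⟨(k : ℕ), Finset.mem_range.mpr k.isLt⟩) :=
    measurable_pi_lambda _ fun k => measurable_pi_apply _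
  have hψ : Measurable (fun (x : {i // i ∈ T} → ℝ) (k : Fin m) =>
      x ⟨t + (k : ℕ), by rw [hT, Finset.mem_image]; exact ⟨k, Finset.mem_range.mpr k.isLt, rfl⟩⟩) :=
    measurable_pi_lambda _ fun k => measurable_pi_apply _
  exact h1.comp hφ hψ

/- ### finite walk from a vector -/

noncomputable def pw (q : ℕ) (v : Fin q → ℝ) (j : ℕ) : ℝ :=
  ∑ k ∈ Finset.range j, (if h : k < q then v ⟨k, h⟩ else 0)

lemma pw_meas (q j : ℕ) : Measurable fun v : Fin q → ℝ => pw q v j := by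
  unfold pw
  refine Finset.measurable_sum _ fun k _ => ?_
  by_cases h : k < q
  · simp only [dif_pos h]; exact measurable_pi_apply _
  · simp only [dif_neg h]; exact measurable_const

theorem stmt10 {Ω : Type*} [MeasureSpace Ω] [IsProbabilityMeasure (ℙ : Measure Ω)]
    (S : Ω → ℕ → ℝ) (hmeas : ∀ n, Measurable fun ω => S ω n)
    (h0 : ∀ ω, S ω 0 = 0)
    (hindep : iIndepFun (fun n ω => S ω (n + 1) - S ω n) ℙ)
    (hident : ∀ n,
      Measure.map (fun ω => S ω (n + 1) - S ω n) ℙ = Measure.map (fun ω => S ω 1) ℙ)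
    (hlad : ∀ᵐ ω ∂ℙ, ∀ i,
      {ℓ | ladder (S ω) i < ℓ ∧ ∀ j ≤ ladder (S ω) i, S ω j < S ω ℓ}.Nonempty)
    (lam : ℝ) (hlam : 0 < lam) (i : ℕ) (hi : 1 ≤ i) :
    ℙ {ω | drawdownMax (S ω) (ladder (S ω) (i - 1)) ≤ lam}
      ≤ ℙ {ω | drawdownMax (S ω) (ladder (S ω) 1) ≤ lam} ^ (i - 1) := by
  classical
  set X : ℕ → Ω → ℝ := fun n ω => S ω (n + 1) - S ω n with hXdef
  have hXmeas : ∀ n, Measurable (X n) := fun n => (hmeas (n + 1)).sub (hmeas n)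
  have hind : iIndepFun X ℙ := hindep
  have hid : ∀ n, Measure.map (X n) ℙ = Measure.map (X 0) ℙ := by
    intro n
    have h1 : Measure.map (X 0) ℙ = Measure.map (fun ω => S ω 1) ℙ := hident 0
    rw [hXdef]; rw [hident n, ← h1]
  set V : ℕ → (m : ℕ) → Ω → (Fin m → ℝ) := fun t m ω k => X (t + (k : ℕ)) ω with hVdef
  have hVmeas : ∀ t m, Measurable (V t m) := fun t m =>
    measurable_pi_lambda _ fun k => hXmeas _
  have hpwS : ∀ ω t m j, j ≤ m → pw m (V t m ω) j = S ω (t + j) - S ω t := by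
    intro ω t m j
    induction j with
    | zero => intro _; simp [pw]
    | succ j ih =>
      intro hj
      have hjm : j < m := by omega
      unfold pw
      rw [Finset.sum_range_succ]
      have h1 : ∑ k ∈ Finset.range j, (if h : k < m then V t m ω ⟨k, h⟩ else 0)
          = pw m (V t m ω) j := rfl
      rw [h1, ih (by omega), dif_pos hjm]
      show S ω (t + j) - S ω t + X (t + j) ω = _
      rw [hXdef]
      have : t + (j + 1) = (t + j) + 1 := rfl
      rw [this]
      ring
  -- the set of "good" paths
  set N : Set Ω := {ω | ¬ ∀ k,
    {ℓ | ladder (S ω) k < ℓ ∧ ∀ j ≤ ladder (S ω) k, S ω j < S ω ℓ}.Nonempty} with hNdef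
  have hN : ℙ N = 0 := ae_iff.mp hlad
  -- main induction
  have main : ∀ n : ℕ, ℙ {ω | drawdownMax (S ω) (ladder (S ω) n) ≤ lam}
      ≤ ℙ {ω | drawdownMax (S ω) (ladder (S ω) 1) ≤ lam} ^ n := by
    intro n
    induction n with
    | zero => simpa using prob_le_one
    | succ n ih =>
      -- key step
      have key : ℙ {ω | drawdownMax (S ω) (ladder (S ω) (n+1)) ≤ lam}
          ≤ ℙ {ω | drawdownMax (S ω) (ladder (S ω) n) ≤ lam}
            * ℙ {ω | drawdownMax (S ω) (ladder (S ω) 1) ≤ lam} := by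
        set D : (t : ℕ) → Set (Fin t → ℝ) := fun t =>
          {v | IsLadderUpTo (pw t v) n t ∧ drawdownMax (pw t v) t ≤ lam} with hDdef
        set E : (m : ℕ) → Set (Fin m → ℝ) := fun m =>
          {v | IsLadderUpTo (pw m v) 1 m ∧ drawdownMax (pw m v) m ≤ lam} with hEdef
        have hDmeas : ∀ t, MeasurableSet (D t) := fun t =>
          (meas_chain (f := fun j v => pw t v j) (fun j => pw_meas t j) n t).inter
            (meas_drawdown (f := fun j v => pw t v j) (fun j => pw_meas t j) hlam.le t)
        have hEmeas : ∀ m, MeasurableSet (E m) := fun m =>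
          (meas_chain (f := fun j v => pw m v j) (fun j => pw_meas m j) 1 m).inter
            (meas_drawdown (f := fun j v => pw m v j) (fun j => pw_meas m j) hlam.le m)
        set V0 : (t : ℕ) → Ω → (Fin t → ℝ) := fun t ω k => X (k : ℕ) ω with hV0def
        have hV0meas : ∀ t, Measurable (V0 t) := fun t =>
          measurable_pi_lambda _ fun k => hXmeas _
        have hV0eq : ∀ t ω, V0 t ω = V 0 t ω := by
          intro t ω; funext k; show X (k : ℕ) ω = X (0 + (k : ℕ)) ω; rw [Nat.zero_add]
        set C : ℕ → Set Ω := fun t => V0 t ⁻¹' D t with hCdef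
        set B : ℕ → ℕ → Set Ω := fun t m => V t m ⁻¹' E m with hBdef
        -- characterizations
        have hCchar : ∀ ω t, ω ∈ C t ↔
            (IsLadderUpTo (S ω) n t ∧ drawdownMax (S ω) t ≤ lam) := by
          intro ω t
          have heq : ∀ j ≤ t, pw t (V0 t ω) j = S ω j := by
            intro j hj
            rw [hV0eq t ω, hpwS ω 0 t j hj, h0, Nat.zero_add, sub_zero]
          constructor
          · rintro ⟨h1, h2⟩
            exact ⟨chain_congr (fun j hj => heq j hj) h1,
              by rw [← drawdown_congr (fun j hj => heq j hj)]; exact h2⟩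
          · rintro ⟨h1, h2⟩
            exact ⟨chain_congr (fun j hj => (heq j hj).symm) h1,
              by rw [drawdown_congr (fun j hj => heq j hj)]; exact h2⟩
        have hBchar : ∀ ω t m, ω ∈ B t m ↔
            (IsLadderUpTo (fun j => S ω (t + j) - S ω t) 1 m ∧
              drawdownMax (fun j => S ω (t + j) - S ω t) m ≤ lam) := by
          intro ω t m
          have heq : ∀ j ≤ m, pw m (V t m ω) j = S ω (t + j) - S ω t := fun j hj =>
            hpwS ω t m j hj
          constructor
          · rintro ⟨h1, h2⟩
            exact ⟨chain_congr (fun j hj => heq j hj) h1,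
              by rw [← drawdown_congr (fun j hj => heq j hj)]; exact h2⟩
          · rintro ⟨h1, h2⟩
            exact ⟨chain_congr (fun j hj => (heq j hj).symm) h1,
              by rw [drawdown_congr (fun j hj => heq j hj)]; exact h2⟩
        -- measurability of events
        have hBmeas : ∀ t m, MeasurableSet (B t m) := fun t m => (hVmeas t m) (hEmeas m)
        have hCmeas : ∀ t, MeasurableSet (C t) := fun t => (hV0meas t) (hDmeas t)
        -- identical distribution
        have hBprob : ∀ t m, ℙ (B t m) = ℙ (B 0 m) := by
          intro t m
          show ℙ (V t m ⁻¹' E m) = ℙ (V 0 m ⁻¹' E m)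
          rw [← Measure.map_apply (hVmeas t m) (hEmeas m),
              ← Measure.map_apply (hVmeas 0 m) (hEmeas m)]
          rw [hVdef]
          rw [aux_map_pi hXmeas hind hid t m, aux_map_pi hXmeas hind hid 0 m]
        -- independence
        have hCB : ∀ t m, ℙ (C t ∩ B t m) = ℙ (C t) * ℙ (B t m) := fun t m =>
          (aux_indep hXmeas hind t m).measure_inter_preimage_eq_mul (D t) (E m) (hDmeas t) (hEmeas m)
        -- covering
        have hcover : {ω | drawdownMax (S ω) (ladder (S ω) (n+1)) ≤ lam}
            ⊆ (⋃ t, ⋃ m, (C t ∩ B t m)) ∪ N := by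
          intro ω hω
          by_cases hg : ∀ k, {ℓ | ladder (S ω) k < ℓ ∧
              ∀ j ≤ ladder (S ω) k, S ω j < S ω ℓ}.Nonempty
          · left
            obtain ⟨hchain, hdd, hchain', hdd'⟩ := shift_cover hg (h0 ω) hlam n hω
            exact Set.mem_iUnion.mpr ⟨ladder (S ω) n, Set.mem_iUnion.mpr
              ⟨ladder (S ω) (n+1) - ladder (S ω) n,
                ⟨(hCchar ω _).mpr ⟨hchain, hdd⟩, (hBchar ω _ _).mpr ⟨hchain', hdd'⟩⟩⟩⟩
          · right; exact hg
        -- inclusions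
        have hBzero : ∀ m ω, ω ∈ B 0 m →
            IsLadderUpTo (S ω) 1 m ∧ drawdownMax (S ω) m ≤ lam := by
          intro m ω hω
          obtain ⟨h1, h2⟩ := (hBchar ω 0 m).mp hω
          have heq : ∀ j ≤ m, S ω (0 + j) - S ω 0 = S ω j := fun j hj => by
            rw [Nat.zero_add, h0, sub_zero]
          exact ⟨chain_congr heq h1, by rw [← drawdown_congr heq]; exact h2⟩
        have hBsub : ∀ m, B 0 m ⊆ {ω | drawdownMax (S ω) (ladder (S ω) 1) ≤ lam} := by
          intro m ω hω
          obtain ⟨h1, h2⟩ := hBzero m ω hω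
          show drawdownMax (S ω) (ladder (S ω) 1) ≤ lam
          rw [chain_ladder h1]; exact h2
        have hCsub : ∀ t, C t ⊆ {ω | drawdownMax (S ω) (ladder (S ω) n) ≤ lam} := by
          intro t ω hω
          obtain ⟨h1, h2⟩ := (hCchar ω t).mp hω
          show drawdownMax (S ω) (ladder (S ω) n) ≤ lam
          rw [chain_ladder h1]; exact h2
        -- disjointness
        have hBdisj : Pairwise (Function.onFun Disjoint (B 0)) := by
          intro m m' hmm'
          rw [Function.onFun, Set.disjoint_left]
          intro ω h1 h2
          have e1 := chain_ladder (hBzero m ω h1).1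
          have e2 := chain_ladder (hBzero m' ω h2).1
          exact hmm' (e1.symm.trans e2)
        have hCdisj : Pairwise (Function.onFun Disjoint C) := by
          intro t t' htt'
          rw [Function.onFun, Set.disjoint_left]
          intro ω h1 h2
          have e1 := chain_ladder ((hCchar ω t).mp h1).1
          have e2 := chain_ladder ((hCchar ω t').mp h2).1
          exact htt' (e1.symm.trans e2)
        -- sums
        have hBsum : ∑' m, ℙ (B 0 m) ≤ ℙ {ω | drawdownMax (S ω) (ladder (S ω) 1) ≤ lam} := by
          rw [← measure_iUnion hBdisj (fun m => hBmeas 0 m)]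
          exact measure_mono (Set.iUnion_subset hBsub)
        have hCsum : ∑' t, ℙ (C t) ≤ ℙ {ω | drawdownMax (S ω) (ladder (S ω) n) ≤ lam} := by
          rw [← measure_iUnion hCdisj hCmeas]
          exact measure_mono (Set.iUnion_subset hCsub)
        calc ℙ {ω | drawdownMax (S ω) (ladder (S ω) (n+1)) ≤ lam}
            ≤ ℙ ((⋃ t, ⋃ m, (C t ∩ B t m)) ∪ N) := measure_mono hcover
          _ ≤ ℙ (⋃ t, ⋃ m, (C t ∩ B t m)) + ℙ N := measure_union_le _ _
          _ = ℙ (⋃ t, ⋃ m, (C t ∩ B t m)) := by rw [hN, add_zero]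
          _ ≤ ∑' t, ℙ (⋃ m, C t ∩ B t m) := measure_iUnion_le _
          _ ≤ ∑' t, ∑' m, ℙ (C t ∩ B t m) :=
              ENNReal.tsum_le_tsum fun t => measure_iUnion_le _
          _ = ∑' t, ∑' m, ℙ (C t) * ℙ (B 0 m) := by
              refine tsum_congr fun t => tsum_congr fun m => ?_
              rw [hCB t m, hBprob t m]
          _ = ∑' t, ℙ (C t) * ∑' m, ℙ (B 0 m) := tsum_congr fun t => ENNReal.tsum_mul_left
          _ ≤ ∑' t, ℙ (C t) * ℙ {ω | drawdownMax (S ω) (ladder (S ω) 1) ≤ lam} :=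
              ENNReal.tsum_le_tsum fun t => mul_le_mul_right hBsum _
          _ = (∑' t, ℙ (C t)) * ℙ {ω | drawdownMax (S ω) (ladder (S ω) 1) ≤ lam} :=
              ENNReal.tsum_mul_right
          _ ≤ _ := mul_le_mul_left hCsum _
      calc ℙ {ω | drawdownMax (S ω) (ladder (S ω) (n+1)) ≤ lam}
          ≤ ℙ {ω | drawdownMax (S ω) (ladder (S ω) n) ≤ lam}
            * ℙ {ω | drawdownMax (S ω) (ladder (S ω) 1) ≤ lam} := key
        _ ≤ ℙ {ω | drawdownMax (S ω) (ladder (S ω) 1) ≤ lam} ^ n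
            * ℙ {ω | drawdownMax (S ω) (ladder (S ω) 1) ≤ lam} :=
            mul_le_mul_left ih _
        _ = _ := by rw [← pow_succ]
  exact main (i - 1)
end

section
/- Let (S_n) be a random walk with centered, non-degenerate i.i.d. increments satisfying E[e^{a|S_1|}] < ∞ for some a > 0. Fix 0 < b < a. Then there exists a constant C < ∞ such that for all sufficiently large λ, E[ Σ_{ℓ=0}^{τ_λ − 1} e^{−b(λ − (max_{0≤j≤ℓ} S_j − S_ℓ))} ] ≤ C, where τ_λ := inf{i ≥ 1 : max_{1≤j≤i} S_j − S_i > λ}. -/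
open MeasureTheory ProbabilityTheory Real

set_option maxHeartbeats 1000000

/-- Running maximum over `0 ≤ j ≤ k`. -/
noncomputable def runMax0 (S : ℕ → ℝ) (k : ℕ) : ℝ := ⨆ i ∈ Finset.range (k + 1), S i

/-- `τ_λ`, the first time `i ≥ 1` at which the drawdown exceeds `λ`. -/
noncomputable def tauDD (S : ℕ → ℝ) (lam : ℝ) : ℕ :=
  sInf {i | 1 ≤ i ∧ lam < runMax S i - S i}



lemma bsup_eq (f : ℕ → ℝ) (s : Finset ℕ) :
    (⨆ i ∈ s, f i) = sSup (f '' ↑s ∪ {0}) := by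
  have hfun : (fun i => ⨆ _ : i ∈ s, f i) = fun i => if i ∈ s then f i else 0 := by
    funext i
    by_cases h : i ∈ s
    · haveI : Nonempty (i ∈ s) := ⟨h⟩
      simp [h, ciSup_const]
    · haveI : IsEmpty (i ∈ s) := ⟨h⟩
      simp [h, Real.iSup_of_isEmpty]
  have hrange : Set.range (fun i => if i ∈ s then f i else 0) = f '' ↑s ∪ {0} := by
    ext x
    constructor
    · rintro ⟨i, rfl⟩
      by_cases h : i ∈ s
      · exact Or.inl ⟨i, h, by simp [h]⟩
      · simp [h]
    · rintro (⟨i, hi, rfl⟩ | hx)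
      · exact ⟨i, if_pos hi⟩
      · refine ⟨s.sup id + 1, ?_⟩
        have hnot : s.sup id + 1 ∉ s := by
          intro h
          have := Finset.le_sup (f := id) h
          simp only [id] at this
          omega
        simp only [hnot, if_neg, if_false]
        exact hx.symm
  rw [show (⨆ i ∈ s, f i) = ⨆ i, ⨆ _ : i ∈ s, f i from rfl, ← sSup_range, hfun, hrange]

lemma bsup_bdd (f : ℕ → ℝ) (s : Finset ℕ) : BddAbove (f '' ↑s ∪ {0}) :=
  ((s.finite_toSet.image f).union (Set.finite_singleton 0)).bddAbove

lemma bsup_nonneg (f : ℕ → ℝ) (s : Finset ℕ) : 0 ≤ ⨆ i ∈ s, f i := by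
  rw [bsup_eq]
  exact le_csSup (bsup_bdd f s) (Or.inr rfl)

lemma le_bsup (f : ℕ → ℝ) {s : Finset ℕ} {i : ℕ} (hi : i ∈ s) : f i ≤ ⨆ i ∈ s, f i := by
  rw [bsup_eq]
  exact le_csSup (bsup_bdd f s) (Or.inl ⟨i, hi, rfl⟩)

lemma bsup_le (f : ℕ → ℝ) {s : Finset ℕ} {c : ℝ} (hc : 0 ≤ c) (h : ∀ i ∈ s, f i ≤ c) :
    (⨆ i ∈ s, f i) ≤ c := by
  rw [bsup_eq]
  refine csSup_le (by simp) ?_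
  rintro x (⟨i, hi, rfl⟩ | hx)
  · exact h i hi
  · simp at hx; simp [hx, hc]


lemma runMax0_nonneg (S : ℕ → ℝ) (k : ℕ) : 0 ≤ runMax0 S k := bsup_nonneg _ _

lemma le_runMax0 (S : ℕ → ℝ) {i k : ℕ} (h : i ≤ k) : S i ≤ runMax0 S k :=
  le_bsup S (by simp [Finset.mem_range]; omega)

lemma runMax0_le (S : ℕ → ℝ) {k : ℕ} {c : ℝ} (hc : 0 ≤ c) (h : ∀ i ≤ k, S i ≤ c) :
    runMax0 S k ≤ c :=
  bsup_le S hc (fun i hi => h i (by simpa [Nat.lt_succ_iff] using Finset.mem_range.1 hi))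

lemma runMax0_zero' (S : ℕ → ℝ) : runMax0 S 0 = max (S 0) 0 := by
  refine le_antisymm (runMax0_le S (le_max_right _ _) ?_) (max_le (le_runMax0 S le_rfl) (runMax0_nonneg S 0))
  intro i hi
  interval_cases i
  exact le_max_left _ _

lemma runMax0_succ (S : ℕ → ℝ) (k : ℕ) :
    runMax0 S (k + 1) = max (runMax0 S k) (S (k + 1)) := by
  refine le_antisymm ?_ (max_le ?_ (le_runMax0 S le_rfl))
  · refine runMax0_le S (le_max_of_le_left (runMax0_nonneg S k)) ?_
    intro i hi
    rcases Nat.lt_succ_iff_lt_or_eq.1 (Nat.lt_succ_of_le hi) with h | h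
    · exact le_max_of_le_left (le_runMax0 S (Nat.lt_succ_iff.1 h))
    · exact h ▸ le_max_right _ _
  · exact runMax0_le S (runMax0_nonneg S (k+1)) (fun i hi => le_runMax0 S (hi.trans (Nat.le_succ k)))

lemma runMax0_congr {S T : ℕ → ℝ} {k : ℕ} (h : ∀ i ≤ k, S i = T i) :
    runMax0 S k = runMax0 T k := by
  refine le_antisymm (runMax0_le S (runMax0_nonneg T k) fun i hi => ?_)
    (runMax0_le T (runMax0_nonneg S k) fun i hi => ?_)
  · exact (h i hi) ▸ le_runMax0 T hi
  · exact (h i hi) ▸ le_runMax0 S hi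

lemma runMax_eq_runMax0 {S : ℕ → ℝ} (h0 : S 0 = 0) (k : ℕ) : runMax S k = runMax0 S k := by
  refine le_antisymm (bsup_le S (runMax0_nonneg S k) fun i hi => ?_)
    (runMax0_le S ?_ fun i hi => ?_)
  · simp only [Finset.mem_Icc] at hi
    exact le_runMax0 S hi.2
  · exact bsup_nonneg _ _
  · rcases Nat.eq_zero_or_pos i with rfl | hpos
    · exact h0.le.trans (bsup_nonneg _ _)
    · exact le_bsup S (Finset.mem_Icc.2 ⟨hpos, hi⟩)

noncomputable def dd (w : ℕ → ℝ) (j : ℕ) : ℝ := runMax0 w j - w j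

lemma dd_nonneg (w : ℕ → ℝ) (j : ℕ) : 0 ≤ dd w j :=
  sub_nonneg.2 (le_runMax0 w le_rfl)

lemma dd_zero {w : ℕ → ℝ} (h : w 0 = 0) : dd w 0 = 0 := by
  simp [dd, runMax0_zero', h]

lemma dd_succ (w : ℕ → ℝ) (j : ℕ) :
    dd w (j + 1) = max (dd w j - (w (j + 1) - w j)) 0 := by
  have h1 : dd w j - (w (j+1) - w j) = runMax0 w j - w (j+1) := by simp only [dd]; ring
  rw [h1, dd, runMax0_succ, ← max_sub_sub_right, sub_self]

lemma dd_congr {w v : ℕ → ℝ} {k : ℕ} (h : ∀ i ≤ k, w i = v i) : dd w k = dd v k := by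
  simp [dd, runMax0_congr h, h k le_rfl]

lemma measurable_runMax0 (k : ℕ) : Measurable (fun w : ℕ → ℝ => runMax0 w k) := by
  induction k with
  | zero =>
      simp only [runMax0_zero']
      exact (measurable_pi_apply 0).max measurable_const
  | succ k ih =>
      simp only [runMax0_succ]
      exact ih.max (measurable_pi_apply (k+1))

lemma measurable_dd (k : ℕ) : Measurable (fun w : ℕ → ℝ => dd w k) :=
  (measurable_runMax0 k).sub (measurable_pi_apply k)

lemma tau_lt_mem {w : ℕ → ℝ} (h0 : w 0 = 0) {lam : ℝ} (hlam : 0 ≤ lam) {ℓ : ℕ}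
    (hℓ : ℓ < tauDD w lam) : ∀ j ≤ ℓ, dd w j ≤ lam := by
  intro j hj
  rcases Nat.eq_zero_or_pos j with rfl | hpos
  · simpa [dd_zero h0] using hlam
  · by_contra hcon
    push_neg at hcon
    have hmem : j ∈ {i | 1 ≤ i ∧ lam < runMax w i - w i} := by
      refine ⟨hpos, ?_⟩
      rw [runMax_eq_runMax0 h0]
      exact hcon
    have : tauDD w lam ≤ j := Nat.sInf_le hmem
    omega


lemma int_exp_neg {μ : Measure ℝ} {a : ℝ} (hint : Integrable (fun x => exp (a*|x|)) μ)
    (t : ℝ) (ht : |t| ≤ a) : Integrable (fun x => exp (-t*x)) μ := by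
  refine hint.mono' (Real.measurable_exp.comp (measurable_const.mul measurable_id)).aestronglyMeasurable (Filter.Eventually.of_forall fun x => ?_)
  rw [Real.norm_eq_abs, abs_exp]
  apply Real.exp_le_exp.2
  have h1 : -t*x ≤ |t| * |x| := by
    have h2 : -t*x ≤ |(-t)*x| := le_abs_self _
    rwa [abs_mul, abs_neg] at h2
  have h3 : |t| * |x| ≤ a * |x| := mul_le_mul_of_nonneg_right ht (abs_nonneg x)
  linarith

lemma core_real (μ : Measure ℝ) [IsProbabilityMeasure μ] (a b : ℝ) (hb0 : 0 < b) (hba : b < a)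
    (ρ Ma c K : ℝ)
    (hρ : ρ = ∫ x, exp (-b*x) ∂μ) (hMa : Ma = ∫ x, exp (-a*x) ∂μ)
    (hint : Integrable (fun x => exp (a*|x|)) μ)
    (hδ : 1 < ρ)
    (hc : 0 ≤ c) (hMc : Ma * exp (-(a-b)*(c/b)) ≤ (ρ-1)/2) (hK : K = 2/(ρ-1))
    (lam d : ℝ) (hlam : 0 ≤ lam) (hd0 : 0 ≤ d) (hdlam : d ≤ lam) :
    (∫ x, Set.indicator {x : ℝ | max (d-x) 0 ≤ lam}
        (fun x => K * (exp (b*lam+c) - exp (b*(max (d-x) 0)))) x ∂μ) + exp (b*d)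
      ≤ K * (exp (b*lam+c) - exp (b*d)) := by
  have ha : 0 < a := hb0.trans hba
  have hKpos : 0 < K := hK ▸ div_pos two_pos (by linarith)
  set T : Set ℝ := {x : ℝ | max (d-x) 0 ≤ lam} with hT
  have Tmeas : MeasurableSet T :=
    measurableSet_le ((measurable_const.sub measurable_id).max measurable_const) measurable_const
  set P : ℝ → ℝ := Set.indicator T (fun x => K * (exp (b*lam+c) - exp (b*(max (d-x) 0)))) with hP
  have hexpd : 0 < exp (b*d) := exp_pos _
  have hexplc : 0 < exp (b*lam+c) := exp_pos _
  have hP_nonneg : ∀ x, 0 ≤ P x := by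
    intro x
    rw [hP]
    by_cases hx : x ∈ T
    · rw [Set.indicator_of_mem hx]
      have h1 : max (d-x) 0 ≤ lam := hx
      have : exp (b*(max (d-x) 0)) ≤ exp (b*lam+c) := by
        apply exp_le_exp.2
        nlinarith [hb0.le]
      nlinarith
    · rw [Set.indicator_of_notMem hx]
  have hP_le : ∀ x, P x ≤ K * exp (b*lam+c) := by
    intro x
    rw [hP]
    by_cases hx : x ∈ T
    · rw [Set.indicator_of_mem hx]
      have := exp_pos (b*(max (d-x) 0))
      nlinarith
    · rw [Set.indicator_of_notMem hx]; positivity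
  have hPQ : ∀ x, P x ≤ K * exp (b*lam+c) - K * exp (b*d) * exp (-b*x)
      + (K * exp (b*d) * exp ((a-b)*(d - lam - c/b))) * exp (-a*x) := by
    intro x
    have hCx : 0 < (K * exp (b*d) * exp ((a-b)*(d - lam - c/b))) * exp (-a*x) := by positivity
    by_cases hx : x ∈ T
    · rw [hP, Set.indicator_of_mem hx]
      have h1 : d - x ≤ max (d-x) 0 := le_max_left _ _
      have h2 : exp (b*(d-x)) ≤ exp (b*(max (d-x) 0)) := by
        apply exp_le_exp.2; nlinarith [hb0.le]
      have h3 : exp (b*d) * exp (-b*x) = exp (b*(d-x)) := by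
        rw [← Real.exp_add]; congr 1; ring
      have h5 : K * exp (b*(d-x)) ≤ K * exp (b*(max (d-x) 0)) :=
        mul_le_mul_of_nonneg_left h2 hKpos.le
      nlinarith
    · rw [hP, Set.indicator_of_notMem hx]
      have hxlt : x < d - lam := by
        simp only [hT, Set.mem_setOf_eq, not_le] at hx
        have : lam < d - x := by
          rcases le_or_gt (d-x) 0 with h | h
          · exfalso; rw [max_eq_right h] at hx; exact absurd hlam (not_le.2 hx)
          · rwa [max_eq_left h.le] at hx
        linarith
      rcases le_or_gt (d - lam - c/b) x with hcase | hcase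
      · have h2 : exp (-b*x) ≤ exp (-b*(d-lam-c/b)) := by
          apply exp_le_exp.2; nlinarith
        have heq : exp (b*d) * exp (-b*(d-lam-c/b)) = exp (b*lam+c) := by
          rw [← Real.exp_add]
          congr 1
          field_simp
          ring
        have hAB : K * exp (b*d) * exp (-b*x) ≤ K * exp (b*lam+c) := by
          calc K * exp (b*d) * exp (-b*x) ≤ K * exp (b*d) * exp (-b*(d-lam-c/b)) :=
                mul_le_mul_of_nonneg_left h2 (by positivity)
          _ = K * exp (b*lam+c) := by rw [mul_assoc, heq]
        linarith
      · have hBC : K * exp (b*d) * exp (-b*x)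
            ≤ (K * exp (b*d) * exp ((a-b)*(d - lam - c/b))) * exp (-a*x) := by
          have h2 : exp (-b*x) ≤ exp ((a-b)*(d-lam-c/b)) * exp (-a*x) := by
            rw [← Real.exp_add]
            apply exp_le_exp.2
            have hb' : 0 < a - b := by linarith
            have : (a-b)*x ≤ (a-b)*(d-lam-c/b) := by nlinarith
            linarith
          calc K * exp (b*d) * exp (-b*x)
              ≤ K * exp (b*d) * (exp ((a-b)*(d-lam-c/b)) * exp (-a*x)) :=
                mul_le_mul_of_nonneg_left h2 (by positivity)
          _ = _ := by ring
        nlinarith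
  have hintb : Integrable (fun x => exp (-b*x)) μ := by
    apply int_exp_neg hint
    rw [abs_of_pos hb0]; exact hba.le
  have hinta : Integrable (fun x => exp (-a*x)) μ := by
    apply int_exp_neg hint
    rw [abs_of_pos ha]
  have hPmeas : Measurable P := by
    apply Measurable.indicator _ Tmeas
    fun_prop
  have hPint : Integrable P μ := by
    refine (integrable_const (K * exp (b*lam+c))).mono' hPmeas.aestronglyMeasurable
      (Filter.Eventually.of_forall fun x => ?_)
    rw [Real.norm_eq_abs, abs_of_nonneg (hP_nonneg x)]
    exact hP_le x
  have hQint : Integrable (fun x => K * exp (b*lam+c) - K * exp (b*d) * exp (-b*x)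
      + (K * exp (b*d) * exp ((a-b)*(d - lam - c/b))) * exp (-a*x)) μ :=
    ((integrable_const _).sub (hintb.const_mul _)).add (hinta.const_mul _)
  have hQval : ∫ x, (K * exp (b*lam+c) - K * exp (b*d) * exp (-b*x)
      + (K * exp (b*d) * exp ((a-b)*(d - lam - c/b))) * exp (-a*x)) ∂μ
      = K * exp (b*lam+c) - K * exp (b*d) * ρ
        + (K * exp (b*d) * exp ((a-b)*(d - lam - c/b))) * Ma := by
    have e1 : ∫ x, ((K * exp (b*lam+c) - K * exp (b*d) * exp (-b*x))
        + (K * exp (b*d) * exp ((a-b)*(d - lam - c/b))) * exp (-a*x)) ∂μ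
        = (∫ x, (K * exp (b*lam+c) - K * exp (b*d) * exp (-b*x)) ∂μ)
          + ∫ x, (K * exp (b*d) * exp ((a-b)*(d - lam - c/b))) * exp (-a*x) ∂μ :=
      integral_add ((integrable_const _).sub (hintb.const_mul _)) (hinta.const_mul _)
    have e2 : ∫ x, (K * exp (b*lam+c) - K * exp (b*d) * exp (-b*x)) ∂μ
        = (∫ _x, (K * exp (b*lam+c)) ∂μ) - ∫ x, (K * exp (b*d)) * exp (-b*x) ∂μ :=
      integral_sub (integrable_const _) (hintb.const_mul _)
    rw [e1, e2, integral_const_mul, integral_const_mul, integral_const, hρ, hMa]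
    simp only [measure_univ, probReal_univ, ENNReal.toReal_one, smul_eq_mul, one_mul, neg_mul]
    rw [integral_const_mul]
  have hmono : ∫ x, P x ∂μ ≤ ∫ x, (K * exp (b*lam+c) - K * exp (b*d) * exp (-b*x)
      + (K * exp (b*d) * exp ((a-b)*(d - lam - c/b))) * exp (-a*x)) ∂μ :=
    integral_mono hPint hQint hPQ
  have hMa0 : 0 ≤ Ma := by
    rw [hMa]
    positivity
  have hthird : (K * exp (b*d) * exp ((a-b)*(d - lam - c/b))) * Ma ≤ exp (b*d) := by
    have h1 : exp ((a-b)*(d - lam - c/b)) = exp ((a-b)*(d-lam)) * exp (-(a-b)*(c/b)) := by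
      rw [← Real.exp_add]; congr 1; ring
    have h2 : exp ((a-b)*(d-lam)) ≤ 1 := by
      rw [← Real.exp_zero]
      apply exp_le_exp.2
      nlinarith
    have h3 : 0 < exp (-(a-b)*(c/b)) := exp_pos _
    have h4 : Ma * exp (-(a-b)*(c/b)) ≤ (ρ-1)/2 := hMc
    have hKd : K * (ρ-1) = 2 := by rw [hK]; exact div_mul_cancel₀ 2 (by linarith)
    calc (K * exp (b*d) * exp ((a-b)*(d - lam - c/b))) * Ma
        = K * exp (b*d) * (exp ((a-b)*(d-lam)) * (Ma * exp (-(a-b)*(c/b)))) := by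
          rw [h1]; ring
    _ ≤ K * exp (b*d) * (1 * ((ρ-1)/2)) := by
          apply mul_le_mul_of_nonneg_left _ (by positivity)
          apply mul_le_mul h2 h4 (by positivity) zero_le_one
    _ = (K * (ρ-1)) * exp (b*d) / 2 := by ring
    _ = exp (b*d) := by rw [hKd]; ring
  have hfinal : K * exp (b*lam+c) - K * exp (b*d) * ρ
      + (K * exp (b*d) * exp ((a-b)*(d - lam - c/b))) * Ma + exp (b*d)
      ≤ K * (exp (b*lam+c) - exp (b*d)) := by
    have hKd : K * (ρ-1) = 2 := by rw [hK]; exact div_mul_cancel₀ 2 (by linarith)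
    nlinarith [hthird]
  calc (∫ x, P x ∂μ) + exp (b*d)
      ≤ (∫ x, (K * exp (b*lam+c) - K * exp (b*d) * exp (-b*x)
        + (K * exp (b*d) * exp ((a-b)*(d - lam - c/b))) * exp (-a*x)) ∂μ) + exp (b*d) := by
        linarith
  _ = K * exp (b*lam+c) - K * exp (b*d) * ρ
        + (K * exp (b*d) * exp ((a-b)*(d - lam - c/b))) * Ma + exp (b*d) := by rw [hQval]
  _ ≤ _ := hfinal


lemma int_exp_neg' {μ : Measure ℝ} {a : ℝ} (hint : Integrable (fun x => exp (a*|x|)) μ)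
    (t : ℝ) (ht : |t| ≤ a) : Integrable (fun x => exp (-t*x)) μ := by
  refine hint.mono' (Real.measurable_exp.comp (measurable_const.mul measurable_id)).aestronglyMeasurable (Filter.Eventually.of_forall fun x => ?_)
  rw [Real.norm_eq_abs, abs_exp]
  apply Real.exp_le_exp.2
  have h1 : -t*x ≤ |t| * |x| := by
    have h2 : -t*x ≤ |(-t)*x| := le_abs_self _
    rwa [abs_mul, abs_neg] at h2
  have h3 : |t| * |x| ≤ a * |x| := mul_le_mul_of_nonneg_right ht (abs_nonneg x)
  linarith

lemma rho_gt_one (μ : Measure ℝ) [IsProbabilityMeasure μ] (a b : ℝ) (hb0 : 0 < b) (hba : b < a)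
    (hint : Integrable (fun x => exp (a*|x|)) μ) (hcent : ∫ x, x ∂μ = 0)
    (hnd : μ {x : ℝ | x = 0} < 1) : 1 < ∫ x, exp (-b*x) ∂μ := by
  have ha : 0 < a := hb0.trans hba
  have hid : Integrable (fun x : ℝ => x) μ := by
    refine (hint.div_const a).mono' measurable_id.aestronglyMeasurable
      (Filter.Eventually.of_forall fun x => ?_)
    rw [Real.norm_eq_abs, le_div_iff₀ ha]
    nlinarith [Real.add_one_le_exp (a*|x|), abs_nonneg x]
  have hintb : Integrable (fun x => exp (-b*x)) μ := by
    apply int_exp_neg' hint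
    rw [abs_of_pos hb0]; exact hba.le
  set f : ℝ → ℝ := fun x => exp (-b*x) - 1 + b*x with hf
  have hf_int : Integrable f μ := (hintb.sub (integrable_const 1)).add (hid.const_mul b)
  have hf0 : 0 ≤ f := by
    intro x
    have := Real.add_one_le_exp (-b*x)
    simp only [hf, Pi.zero_apply]
    linarith
  have hsupp : Function.support f = {x : ℝ | x ≠ 0} := by
    ext x
    simp only [Function.mem_support, hf, Set.mem_setOf_eq]
    constructor
    · intro h hx
      apply h
      rw [hx]
      simp
    · intro hx
      have hne : -b*x ≠ 0 := by
        simp only [neg_mul, ne_eq, neg_eq_zero, mul_eq_zero, not_or]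
        exact ⟨hb0.ne', hx⟩
      have := Real.add_one_lt_exp hne
      intro hcon
      nlinarith
  have hμsupp : 0 < μ (Function.support f) := by
    rw [hsupp]
    by_contra h
    push_neg at h
    have h0 : μ {x : ℝ | x ≠ 0} = 0 := le_antisymm h zero_le
    have hcompl : {x : ℝ | x = 0}ᶜ = {x : ℝ | x ≠ 0} := rfl
    have := measure_add_measure_compl (μ := μ) (s := {x : ℝ | x = 0})
      (measurableSet_eq_fun measurable_id measurable_const)
    rw [hcompl, h0, add_zero, measure_univ] at this
    rw [this] at hnd
    exact lt_irrefl _ hnd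
  have hpos : 0 < ∫ x, f x ∂μ := (integral_pos_iff_support_of_nonneg hf0 hf_int).2 hμsupp
  have hval : ∫ x, f x ∂μ = (∫ x, exp (-b*x) ∂μ) - 1 := by
    have e1 : ∫ x, ((exp (-b*x) - 1) + b*x) ∂μ
        = (∫ x, (exp (-b*x) - 1) ∂μ) + ∫ x, b*x ∂μ :=
      integral_add (hintb.sub (integrable_const 1)) (hid.const_mul b)
    have e2 : ∫ x, (exp (-b*x) - 1) ∂μ = (∫ x, exp (-b*x) ∂μ) - ∫ _x, (1:ℝ) ∂μ :=
      integral_sub hintb (integrable_const 1)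
    rw [hf]
    rw [e1, e2, integral_const, integral_const_mul, hcent]
    simp
  linarith [hval ▸ hpos]

lemma choose_c (a b Ma δ : ℝ) (hb0 : 0 < b) (hba : b < a) (hMa : 0 ≤ Ma) (hδ : 0 < δ) :
    ∃ c : ℝ, 0 ≤ c ∧ Ma * exp (-(a-b)*(c/b)) ≤ δ/2 := by
  have hab : 0 < a - b := by linarith
  set r := δ/(2*(Ma+1)) with hr
  have hr0 : 0 < r := by positivity
  refine ⟨(b/(a-b)) * |Real.log r|, mul_nonneg (div_pos hb0 hab).le (abs_nonneg _), ?_⟩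
  have harg : -(a-b)*(((b/(a-b)) * |Real.log r|)/b) = -|Real.log r| := by
    field_simp
  rw [harg]
  have h1 : exp (-|Real.log r|) ≤ exp (Real.log r) :=
    exp_le_exp.2 (neg_abs_le _)
  rw [Real.exp_log hr0] at h1
  have h2 : Ma * exp (-|Real.log r|) ≤ (Ma+1) * r := by
    have e0 : (0:ℝ) < exp (-|Real.log r|) := exp_pos _
    nlinarith
  have h3 : (Ma+1) * r = δ/2 := by
    rw [hr]
    field_simp
  linarith

lemma freeze {Ω : Type*} [MeasureSpace Ω] [IsProbabilityMeasure (ℙ : Measure Ω)]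
    {W : Ω → ℕ → ℝ} {Y : Ω → ℝ} (hW : Measurable W) (hY : Measurable Y)
    (hind : IndepFun W Y ℙ) {Θ : (ℕ → ℝ) → ℝ → ENNReal}
    (hΘ : Measurable (fun p : (ℕ → ℝ) × ℝ => Θ p.1 p.2)) :
    ∫⁻ ω, Θ (W ω) (Y ω) ∂ℙ = ∫⁻ ω, ∫⁻ x, Θ (W ω) x ∂(Measure.map Y ℙ) ∂ℙ := by
  haveI : IsProbabilityMeasure (Measure.map Y ℙ) := Measure.isProbabilityMeasure_map hY.aemeasurable
  haveI : IsProbabilityMeasure (Measure.map W ℙ) := Measure.isProbabilityMeasure_map hW.aemeasurable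
  have hmap : Measure.map (fun ω => (W ω, Y ω)) ℙ = (Measure.map W ℙ).prod (Measure.map Y ℙ) :=
    (indepFun_iff_map_prod_eq_prod_map_map hW.aemeasurable hY.aemeasurable).1 hind
  have hmeasint : Measurable fun w => ∫⁻ x, Θ w x ∂(Measure.map Y ℙ) :=
    hΘ.lintegral_prod_right
  calc ∫⁻ ω, Θ (W ω) (Y ω) ∂ℙ
      = ∫⁻ p, Θ p.1 p.2 ∂(Measure.map (fun ω => (W ω, Y ω)) ℙ) :=
        (lintegral_map hΘ (hW.prodMk hY)).symm
  _ = ∫⁻ p, Θ p.1 p.2 ∂((Measure.map W ℙ).prod (Measure.map Y ℙ)) := by rw [hmap]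
  _ = ∫⁻ w, ∫⁻ x, Θ w x ∂(Measure.map Y ℙ) ∂(Measure.map W ℙ) := lintegral_prod _ hΘ.aemeasurable
  _ = ∫⁻ ω, ∫⁻ x, Θ (W ω) x ∂(Measure.map Y ℙ) ∂ℙ := lintegral_map hmeasint hW

lemma core_ennreal (μ : Measure ℝ) [IsProbabilityMeasure μ] (a b : ℝ) (hb0 : 0 < b) (hba : b < a)
    (ρ Ma c K : ℝ)
    (hρ : ρ = ∫ x, exp (-b*x) ∂μ) (hMa : Ma = ∫ x, exp (-a*x) ∂μ)
    (hint : Integrable (fun x => exp (a*|x|)) μ)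
    (hδ : 1 < ρ)
    (hc : 0 ≤ c) (hMc : Ma * exp (-(a-b)*(c/b)) ≤ (ρ-1)/2) (hK : K = 2/(ρ-1))
    (lam d : ℝ) (hlam : 0 ≤ lam) (hd0 : 0 ≤ d) (hdlam : d ≤ lam) :
    (∫⁻ x, Set.indicator (Set.Iic lam)
        (fun y => ENNReal.ofReal (K * (exp (b*lam+c) - exp (b*y)))) (max (d-x) 0) ∂μ)
      + ENNReal.ofReal (exp (b*d))
      ≤ ENNReal.ofReal (K * (exp (b*lam+c) - exp (b*d))) := by
  have hKpos : 0 < K := hK ▸ div_pos two_pos (by linarith)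
  set T : Set ℝ := {x : ℝ | max (d-x) 0 ≤ lam} with hT
  have Tmeas : MeasurableSet T :=
    measurableSet_le ((measurable_const.sub measurable_id).max measurable_const) measurable_const
  set P : ℝ → ℝ := Set.indicator T (fun x => K * (exp (b*lam+c) - exp (b*(max (d-x) 0)))) with hP
  have hP_nonneg : ∀ x, 0 ≤ P x := by
    intro x
    rw [hP]
    by_cases hx : x ∈ T
    · rw [Set.indicator_of_mem hx]
      have h1 : max (d-x) 0 ≤ lam := hx
      have : exp (b*(max (d-x) 0)) ≤ exp (b*lam+c) := by
        apply exp_le_exp.2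
        nlinarith [hb0.le]
      nlinarith
    · rw [Set.indicator_of_notMem hx]
  have hP_le : ∀ x, P x ≤ K * exp (b*lam+c) := by
    intro x
    rw [hP]
    by_cases hx : x ∈ T
    · rw [Set.indicator_of_mem hx]
      have := exp_pos (b*(max (d-x) 0))
      nlinarith
    · rw [Set.indicator_of_notMem hx]; positivity
  have hPmeas : Measurable P := by
    apply Measurable.indicator _ Tmeas
    fun_prop
  have hPint : Integrable P μ := by
    refine (integrable_const (K * exp (b*lam+c))).mono' hPmeas.aestronglyMeasurable
      (Filter.Eventually.of_forall fun x => ?_)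
    rw [Real.norm_eq_abs, abs_of_nonneg (hP_nonneg x)]
    exact hP_le x
  have hkey : ∀ x : ℝ, Set.indicator (Set.Iic lam)
      (fun y => ENNReal.ofReal (K * (exp (b*lam+c) - exp (b*y)))) (max (d-x) 0)
      = ENNReal.ofReal (P x) := by
    intro x
    by_cases hx : max (d-x) 0 ≤ lam
    · rw [Set.indicator_of_mem (show max (d-x) 0 ∈ Set.Iic lam from hx), hP,
        Set.indicator_of_mem (show x ∈ T from hx)]
    · rw [Set.indicator_of_notMem (show max (d-x) 0 ∉ Set.Iic lam from hx), hP,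
        Set.indicator_of_notMem (show x ∉ T from hx)]
      simp
  have h1 : ∫⁻ x, Set.indicator (Set.Iic lam)
      (fun y => ENNReal.ofReal (K * (exp (b*lam+c) - exp (b*y)))) (max (d-x) 0) ∂μ
      = ENNReal.ofReal (∫ x, P x ∂μ) := by
    simp only [hkey]
    exact (ofReal_integral_eq_lintegral_ofReal hPint
      (Filter.Eventually.of_forall hP_nonneg)).symm
  rw [h1, ← ENNReal.ofReal_add (integral_nonneg hP_nonneg) (exp_pos _).le]
  exact ENNReal.ofReal_le_ofReal
    (core_real μ a b hb0 hba ρ Ma c K hρ hMa hint hδ hc hMc hK lam d hlam hd0 hdlam)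

theorem stmt12 {Ω : Type*} [MeasureSpace Ω] [IsProbabilityMeasure (ℙ : Measure Ω)]
    (S : Ω → ℕ → ℝ) (hmeas : ∀ n, Measurable fun ω => S ω n)
    (h0 : ∀ ω, S ω 0 = 0)
    (hindep : iIndepFun (fun n ω => S ω (n + 1) - S ω n) ℙ)
    (hident : ∀ n,
      Measure.map (fun ω => S ω (n + 1) - S ω n) ℙ = Measure.map (fun ω => S ω 1) ℙ)
    (hcent : ∫ ω, S ω 1 ∂ℙ = 0)
    (hnondeg : ℙ {ω | S ω 1 = 0} < 1)
    (a : ℝ) (ha : 0 < a)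
    (hexp : Integrable (fun ω => Real.exp (a * |S ω 1|)) ℙ)
    (b : ℝ) (hb0 : 0 < b) (hba : b < a) :
    ∃ C : ℝ, ∃ lam0 : ℝ, ∀ lam : ℝ, lam0 ≤ lam →
      ∫⁻ ω, ∑ ℓ ∈ Finset.range (tauDD (S ω) lam),
          ENNReal.ofReal (Real.exp (-b * (lam - (runMax0 (S ω) ℓ - S ω ℓ)))) ∂ℙ
        ≤ ENNReal.ofReal C := by
  classical
  set μ : Measure ℝ := Measure.map (fun ω => S ω 1) ℙ with hμ
  haveI : IsProbabilityMeasure μ := Measure.isProbabilityMeasure_map (hmeas 1).aemeasurable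
  have hintμ : Integrable (fun x => exp (a*|x|)) μ := by
    rw [hμ]
    exact (integrable_map_measure
      (Real.measurable_exp.comp (measurable_const.mul measurable_abs)).aestronglyMeasurable
      (hmeas 1).aemeasurable).2 hexp
  have hcentμ : ∫ x, x ∂μ = 0 := by
    have h := integral_map (μ := ℙ) (hmeas 1).aemeasurable
      (f := fun x : ℝ => x) measurable_id.aestronglyMeasurable
    rw [hμ, h]
    exact hcent
  have hndμ : μ {x : ℝ | x = 0} < 1 := by
    have hset : MeasurableSet {x : ℝ | x = 0} := measurableSet_singleton (0:ℝ)
    rw [hμ, Measure.map_apply (hmeas 1) hset]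
    exact hnondeg
  have hρ1 : 1 < ∫ x, exp (-b*x) ∂μ := rho_gt_one μ a b hb0 hba hintμ hcentμ hndμ
  have hMa0 : (0:ℝ) ≤ ∫ x, exp (-a*x) ∂μ := integral_nonneg fun x => (exp_pos _).le
  obtain ⟨c, hc0, hMc⟩ := choose_c a b (∫ x, exp (-a*x) ∂μ) ((∫ x, exp (-b*x) ∂μ) - 1)
    hb0 hba hMa0 (by linarith)
  set K : ℝ := 2/((∫ x, exp (-b*x) ∂μ) - 1) with hKdef
  have hKpos : 0 < K := div_pos two_pos (by linarith)
  refine ⟨K * exp c, 0, fun lam hlam => ?_⟩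
  -- increments
  set X : ℕ → Ω → ℝ := fun n ω => S ω (n + 1) - S ω n with hX
  have hXmeas : ∀ n, Measurable (X n) := fun n => (hmeas (n+1)).sub (hmeas n)
  have hmapX : ∀ n, Measure.map (X n) ℙ = μ := fun n => hident n
  have hSsum : ∀ (ω : Ω) (n : ℕ), S ω n = ∑ i ∈ Finset.range n, X i ω := by
    intro ω n
    have := Finset.sum_range_sub (f := fun i => S ω i) n
    rw [hX]
    simp only [this, h0 ω, sub_zero]
  have hpath : Measurable (fun ω => S ω) := measurable_pi_lambda _ hmeas
  have hDmeas : ∀ j, Measurable fun ω => dd (S ω) j := fun j => (measurable_dd j).comp hpath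
  set Aset : ℕ → Set Ω := fun ℓ => {ω | ∀ j ≤ ℓ, dd (S ω) j ≤ lam} with hAset
  have hAmeas : ∀ ℓ, MeasurableSet (Aset ℓ) := by
    intro ℓ
    have : Aset ℓ = ⋂ j ∈ Set.Iic ℓ, {ω | dd (S ω) j ≤ lam} := by
      ext ω
      simp [hAset, Set.mem_iInter, Set.mem_Iic]
    rw [this]
    exact MeasurableSet.biInter (Set.to_countable _)
      fun j _ => measurableSet_le (hDmeas j) measurable_const
  set Gfun : ℕ → ENNReal := fun ℓ => ∫⁻ ω, (Aset ℓ).indicator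
    (fun ω => ENNReal.ofReal (K * (exp (b*lam+c) - exp (b*(dd (S ω) ℓ))))) ω ∂ℙ with hGfun
  set Efun : ℕ → ENNReal := fun ℓ => ∫⁻ ω, (Aset ℓ).indicator
    (fun ω => ENNReal.ofReal (exp (b * dd (S ω) ℓ))) ω ∂ℙ with hEfun
  have hgKmeas : Measurable fun y : ℝ => ENNReal.ofReal (K * (exp (b*lam+c) - exp (b*y))) := by
    apply ENNReal.measurable_ofReal.comp
    exact (measurable_const.mul (measurable_const.sub
      (Real.measurable_exp.comp (measurable_const.mul measurable_id))))
  -- THE STEP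
  have hstep : ∀ ℓ, Gfun (ℓ+1) + Efun ℓ ≤ Gfun ℓ := by
    intro ℓ
    have hdisj : Disjoint (Finset.range ℓ) ({ℓ} : Finset ℕ) :=
      Finset.disjoint_singleton_right.2 (by simp)
    have hfin := hindep.indepFun_finset (Finset.range ℓ) {ℓ} hdisj hXmeas
    set φ : (↥(Finset.range ℓ) → ℝ) → (ℕ → ℝ) := fun v i =>
      ∑ j ∈ Finset.univ.filter (fun j : ↥(Finset.range ℓ) => (j:ℕ) < i), v j with hφ
    have hφmeas : Measurable φ :=
      measurable_pi_lambda _ fun i => Finset.measurable_sum _ fun j _ => measurable_pi_apply j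
    set W : Ω → ℕ → ℝ := fun ω i => S ω (min i ℓ) with hW
    have hWeq : ∀ ω, φ (fun i : ↥(Finset.range ℓ) => X (↑i) ω) = W ω := by
      intro ω
      funext i
      show ∑ j ∈ Finset.univ.filter (fun j : ↥(Finset.range ℓ) => (j:ℕ) < i),
        X (↑j) ω = S ω (min i ℓ)
      have h1 : ∑ j ∈ Finset.univ.filter (fun j : ↥(Finset.range ℓ) => (j:ℕ) < i), X (↑j) ω
          = ∑ j ∈ (Finset.range ℓ).filter (fun j => j < i), X j ω := by
        rw [Finset.sum_filter, Finset.sum_filter]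
        exact Finset.sum_coe_sort (Finset.range ℓ) (fun j => if j < i then X j ω else 0)
      have h2 : (Finset.range ℓ).filter (fun j => j < i) = Finset.range (min i ℓ) := by
        ext k
        simp only [Finset.mem_filter, Finset.mem_range, Finset.mem_range, lt_min_iff]
        omega
      rw [h1, h2]
      exact (hSsum ω (min i ℓ)).symm
    have hWmeas : Measurable W := measurable_pi_lambda _ fun i => hmeas (min i ℓ)
    have hindWX : IndepFun W (X ℓ) ℙ := by
      have h2 := hfin.comp hφmeas
        (measurable_pi_apply (⟨ℓ, by simp⟩ : ↥({ℓ} : Finset ℕ)))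
      have e1 : (φ ∘ fun ω (i : ↥(Finset.range ℓ)) => X (↑i) ω) = W := funext hWeq
      rwa [show (φ ∘ fun ω (i : ↥(Finset.range ℓ)) => X (↑i) ω) = W from e1] at h2
    set Bset : Set (ℕ → ℝ) := {w | ∀ j ≤ ℓ, dd w j ≤ lam} with hBset
    have hBmeas : MeasurableSet Bset := by
      have : Bset = ⋂ j ∈ Set.Iic ℓ, {w : ℕ → ℝ | dd w j ≤ lam} := by
        ext w
        simp [hBset, Set.mem_iInter, Set.mem_Iic]
      rw [this]
      exact MeasurableSet.biInter (Set.to_countable _)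
        fun j _ => measurableSet_le (measurable_dd j) measurable_const
    set Θ : (ℕ → ℝ) → ℝ → ENNReal := fun w x =>
      Bset.indicator (fun _ => (1:ENNReal)) w *
        Set.indicator (Set.Iic lam)
          (fun y => ENNReal.ofReal (K * (exp (b*lam+c) - exp (b*y)))) (max (dd w ℓ - x) 0)
      with hΘdef
    have hΘmeas : Measurable (fun p : (ℕ → ℝ) × ℝ => Θ p.1 p.2) := by
      apply Measurable.mul
      · exact (measurable_const.indicator hBmeas).comp measurable_fst
      · have hmax : Measurable fun p : (ℕ → ℝ) × ℝ => max (dd p.1 ℓ - p.2) 0 :=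
          (((measurable_dd ℓ).comp measurable_fst).sub measurable_snd).max measurable_const
        exact (hgKmeas.indicator measurableSet_Iic).comp hmax
    have hddW : ∀ (ω : Ω) (j : ℕ), j ≤ ℓ → dd (W ω) j = dd (S ω) j := by
      intro ω j hj
      apply dd_congr
      intro i hi
      rw [hW]
      simp only [min_eq_left (hi.trans hj)]
    have hdd1 : ∀ ω : Ω, dd (S ω) (ℓ+1) = max (dd (S ω) ℓ - X ℓ ω) 0 := fun ω => dd_succ _ _
    have hΘW : ∀ ω, Θ (W ω) (X ℓ ω) = (Aset (ℓ+1)).indicator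
        (fun ω => ENNReal.ofReal (K * (exp (b*lam+c) - exp (b*(dd (S ω) (ℓ+1)))))) ω := by
      intro ω
      simp only [hΘdef]
      by_cases hB : W ω ∈ Bset
      · have hBS : ∀ j ≤ ℓ, dd (S ω) j ≤ lam := fun j hj => (hddW ω j hj) ▸ hB j hj
        rw [Set.indicator_of_mem hB, one_mul, hddW ω ℓ le_rfl]
        by_cases h2 : max (dd (S ω) ℓ - X ℓ ω) 0 ≤ lam
        · have hA : ω ∈ Aset (ℓ+1) := by
            intro j hj
            rcases Nat.lt_succ_iff_lt_or_eq.1 (Nat.lt_succ_of_le hj) with h | h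
            · exact hBS j (Nat.lt_succ_iff.1 h)
            · rw [h, hdd1 ω]; exact h2
          rw [Set.indicator_of_mem (show max (dd (S ω) ℓ - X ℓ ω) 0 ∈ Set.Iic lam from h2),
            Set.indicator_of_mem hA, hdd1 ω]
        · have hA : ω ∉ Aset (ℓ+1) := by
            intro hA
            exact h2 ((hdd1 ω) ▸ hA (ℓ+1) le_rfl)
          rw [Set.indicator_of_notMem
            (show max (dd (S ω) ℓ - X ℓ ω) 0 ∉ Set.Iic lam from h2),
            Set.indicator_of_notMem hA]
      · have hA : ω ∉ Aset (ℓ+1) := by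
          intro hA
          exact hB (fun j hj => (hddW ω j hj).symm ▸ hA j (hj.trans (Nat.le_succ ℓ)))
        rw [Set.indicator_of_notMem hB, zero_mul, Set.indicator_of_notMem hA]
    have hfreeze := freeze hWmeas (hXmeas ℓ) hindWX hΘmeas
    have hGsucc : Gfun (ℓ+1) = ∫⁻ ω, ∫⁻ x, Θ (W ω) x ∂μ ∂ℙ := by
      simp only [hGfun]
      simp only [← hΘW]
      rw [hfreeze, hmapX ℓ]
    have hinnermeas0 : Measurable fun w : ℕ → ℝ => ∫⁻ x, Θ w x ∂μ := by
      have huncurry : Measurable (Function.uncurry Θ) := hΘmeas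
      exact huncurry.lintegral_prod_right
    have hinnermeas : Measurable fun ω => ∫⁻ x, Θ (W ω) x ∂μ := hinnermeas0.comp hWmeas
    have hinner : ∀ ω, (∫⁻ x, Θ (W ω) x ∂μ)
        + (Aset ℓ).indicator (fun ω => ENNReal.ofReal (exp (b * dd (S ω) ℓ))) ω
        ≤ (Aset ℓ).indicator
          (fun ω => ENNReal.ofReal (K * (exp (b*lam+c) - exp (b*(dd (S ω) ℓ))))) ω := by
      intro ω
      by_cases hB : ω ∈ Aset ℓ
      · have hBW : W ω ∈ Bset := fun j hj => (hddW ω j hj).symm ▸ hB j hj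
        have hθ : ∀ x, Θ (W ω) x = Set.indicator (Set.Iic lam)
            (fun y => ENNReal.ofReal (K * (exp (b*lam+c) - exp (b*y))))
            (max (dd (S ω) ℓ - x) 0) := by
          intro x
          simp only [hΘdef]
          rw [Set.indicator_of_mem hBW, one_mul, hddW ω ℓ le_rfl]
        simp only [hθ, Set.indicator_of_mem hB]
        exact core_ennreal μ a b hb0 hba _ _ c K rfl rfl hintμ hρ1 hc0 hMc hKdef
          lam _ hlam (dd_nonneg _ _) (hB ℓ le_rfl)
      · have hBW : W ω ∉ Bset := fun hBW => hB (fun j hj => (hddW ω j hj) ▸ hBW j hj)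
        have hθ : ∀ x, Θ (W ω) x = 0 := by
          intro x
          simp only [hΘdef]
          rw [Set.indicator_of_notMem hBW, zero_mul]
        simp [hθ, Set.indicator_of_notMem hB]
    calc Gfun (ℓ+1) + Efun ℓ
        = ∫⁻ ω, ((∫⁻ x, Θ (W ω) x ∂μ)
          + (Aset ℓ).indicator (fun ω => ENNReal.ofReal (exp (b * dd (S ω) ℓ))) ω) ∂ℙ := by
          rw [hGsucc]
          simp only [hEfun]
          exact (lintegral_add_left hinnermeas _).symm
    _ ≤ ∫⁻ ω, (Aset ℓ).indicator
          (fun ω => ENNReal.ofReal (K * (exp (b*lam+c) - exp (b*(dd (S ω) ℓ))))) ω ∂ℙ :=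
        lintegral_mono hinner
    _ = Gfun ℓ := by simp only [hGfun]
  -- telescoping
  have hsum : ∀ N, (∑ ℓ ∈ Finset.range N, Efun ℓ) + Gfun N ≤ Gfun 0 := by
    intro N
    induction N with
    | zero => simp
    | succ N ih =>
        rw [Finset.sum_range_succ]
        calc (∑ ℓ ∈ Finset.range N, Efun ℓ) + Efun N + Gfun (N+1)
            = (∑ ℓ ∈ Finset.range N, Efun ℓ) + (Gfun (N+1) + Efun N) := by ring
        _ ≤ (∑ ℓ ∈ Finset.range N, Efun ℓ) + Gfun N := add_le_add_right (hstep N) _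
        _ ≤ Gfun 0 := ih
  have hG0 : Gfun 0 ≤ ENNReal.ofReal (K * exp (b*lam+c)) := by
    simp only [hGfun]
    have hle : (∫⁻ ω, (Aset 0).indicator
        (fun ω => ENNReal.ofReal (K * (exp (b*lam+c) - exp (b*(dd (S ω) 0))))) ω ∂ℙ)
        ≤ ∫⁻ (_ω : Ω), ENNReal.ofReal (K * exp (b*lam+c)) ∂ℙ := by
      apply lintegral_mono
      intro ω
      by_cases hB : ω ∈ Aset 0
      · rw [Set.indicator_of_mem hB]
        apply ENNReal.ofReal_le_ofReal
        have := exp_pos (b * dd (S ω) 0)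
        nlinarith
      · rw [Set.indicator_of_notMem hB]
        exact zero_le
    rwa [lintegral_const, measure_univ, mul_one] at hle
  have htsum : (∑' ℓ, Efun ℓ) ≤ ENNReal.ofReal (K * exp (b*lam+c)) := by
    rw [ENNReal.tsum_eq_iSup_sum]
    apply iSup_le
    intro s
    obtain ⟨N, hN⟩ := Finset.exists_nat_subset_range s
    calc ∑ ℓ ∈ s, Efun ℓ ≤ ∑ ℓ ∈ Finset.range N, Efun ℓ :=
          Finset.sum_le_sum_of_subset hN
    _ ≤ Gfun 0 := le_trans (le_add_right le_rfl) (hsum N)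
    _ ≤ _ := hG0
  -- pathwise bound
  have hpathw : ∀ ω, (∑ ℓ ∈ Finset.range (tauDD (S ω) lam),
      ENNReal.ofReal (exp (-b * (lam - (runMax0 (S ω) ℓ - S ω ℓ)))))
      ≤ ∑' ℓ, (Aset ℓ).indicator
        (fun ω => ENNReal.ofReal (exp (-b * (lam - dd (S ω) ℓ)))) ω := by
    intro ω
    have hcongr : ∀ ℓ ∈ Finset.range (tauDD (S ω) lam),
        ENNReal.ofReal (exp (-b * (lam - (runMax0 (S ω) ℓ - S ω ℓ))))
        = (Aset ℓ).indicator
          (fun ω => ENNReal.ofReal (exp (-b * (lam - dd (S ω) ℓ)))) ω := by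
      intro ℓ hℓ
      have hmem : ω ∈ Aset ℓ := by
        intro j hj
        exact tau_lt_mem (h0 ω) hlam (Finset.mem_range.1 hℓ) j hj
      rw [Set.indicator_of_mem hmem]
      rfl
    rw [Finset.sum_congr rfl hcongr]
    exact ENNReal.sum_le_tsum _
  have hindmeas : ∀ ℓ : ℕ, Measurable ((Aset ℓ).indicator
      (fun ω => ENNReal.ofReal (exp (-b * (lam - dd (S ω) ℓ))))) := by
    intro ℓ
    apply Measurable.indicator _ (hAmeas ℓ)
    exact ENNReal.measurable_ofReal.comp (Real.measurable_exp.comp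
      (measurable_const.mul (measurable_const.sub (hDmeas ℓ))))
  have hfact : ∀ (ℓ : ℕ) (ω : Ω), (Aset ℓ).indicator
      (fun ω => ENNReal.ofReal (exp (-b * (lam - dd (S ω) ℓ)))) ω
      = ENNReal.ofReal (exp (-b*lam)) *
        (Aset ℓ).indicator (fun ω => ENNReal.ofReal (exp (b * dd (S ω) ℓ))) ω := by
    intro ℓ ω
    have hexpeq : ∀ t : ℝ, exp (-b * (lam - t)) = exp (-b*lam) * exp (b*t) := by
      intro t
      rw [← Real.exp_add]
      congr 1
      ring
    by_cases hB : ω ∈ Aset ℓ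
    · rw [Set.indicator_of_mem hB, Set.indicator_of_mem hB, hexpeq,
        ENNReal.ofReal_mul (exp_pos _).le]
    · rw [Set.indicator_of_notMem hB, Set.indicator_of_notMem hB, mul_zero]
  calc ∫⁻ ω, ∑ ℓ ∈ Finset.range (tauDD (S ω) lam),
        ENNReal.ofReal (exp (-b * (lam - (runMax0 (S ω) ℓ - S ω ℓ)))) ∂ℙ
      ≤ ∫⁻ ω, ∑' ℓ, (Aset ℓ).indicator
        (fun ω => ENNReal.ofReal (exp (-b * (lam - dd (S ω) ℓ)))) ω ∂ℙ :=
      lintegral_mono hpathw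
  _ = ∑' ℓ, ∫⁻ ω, (Aset ℓ).indicator
        (fun ω => ENNReal.ofReal (exp (-b * (lam - dd (S ω) ℓ)))) ω ∂ℙ :=
      lintegral_tsum (fun ℓ => (hindmeas ℓ).aemeasurable)
  _ = ∑' ℓ, ENNReal.ofReal (exp (-b*lam)) * Efun ℓ := by
      apply tsum_congr
      intro ℓ
      simp only [hfact]
      have hmeasE : Measurable ((Aset ℓ).indicator
          (fun ω => ENNReal.ofReal (exp (b * dd (S ω) ℓ)))) := by
        apply Measurable.indicator _ (hAmeas ℓ)
        exact ENNReal.measurable_ofReal.comp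
          (Real.measurable_exp.comp ((hDmeas ℓ).const_mul b))
      rw [lintegral_const_mul _ hmeasE]
  _ = ENNReal.ofReal (exp (-b*lam)) * ∑' ℓ, Efun ℓ := ENNReal.tsum_mul_left
  _ ≤ ENNReal.ofReal (exp (-b*lam)) * ENNReal.ofReal (K * exp (b*lam+c)) := by
      exact mul_le_mul_right htsum _
  _ = ENNReal.ofReal (K * exp c) := by
      rw [← ENNReal.ofReal_mul (exp_pos _).le]
      congr 1
      have : exp (-b*lam) * exp (b*lam+c) = exp c := by
        rw [← Real.exp_add]
        congr 1
        ring
      calc exp (-b*lam) * (K * exp (b*lam+c)) = K * (exp (-b*lam) * exp (b*lam+c)) := by ring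
      _ = K * exp c := by rw [this]
end
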